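/- arXiv:2602.03827 — 9 statements merged into one kernel-verified Lean document; each statement's English description precedes it below -/
import Mathlib

section
/- If G is a biconnected graph (connected with no cut vertices) and e = {u,v} is a separating link of G (i.e., deleting both endpoints u and v disconnects G), then the graph G with the edge e removed (but u, v retained) is 2-vertex-connected. -/
open SimpleGraph

/-- Two vertices are joined by a walk avoiding a given vertex set. -/
def ReachAvoiding {V : Type} (G : SimpleGraph V) (s : Set V) (a b : V) : Prop :=
  ∃ p : G.Walk a b, ∀ x ∈ p.support, x ∉ s

/-- Connected with no cut vertex. -/
def Biconnected {V : Type} (G : SimpleGraph V) : Prop :=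
  G.Connected ∧ ∀ v a b : V, a ≠ v → b ≠ v → ReachAvoiding G {v} a b

/-- A link is separating if deleting both of its endpoints disconnects the graph. -/
def SepLink {V : Type} (G : SimpleGraph V) (e : Sym2 V) : Prop :=
  e ∈ G.edgeSet ∧ ∃ a b : V, a ∉ e ∧ b ∉ e ∧ ¬ ReachAvoiding G {x | x ∈ e} a b

/-- Every pair of distinct vertices is joined by two internally disjoint paths. -/
def TwoConnected {V : Type} (G : SimpleGraph V) : Prop :=
  ∀ a b : V, a ≠ b → ∃ p q : G.Walk a b, p.IsPath ∧ q.IsPath ∧ p ≠ q ∧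
    ∀ w, w ∈ p.support → w ∈ q.support → w = a ∨ w = b

namespace AuxSep

open SimpleGraph.Walk

variable {V : Type}

lemma mem_concat_left {α : Type*} {l : List α} {a b : α} (h : a ∈ l) : a ∈ l ++ [b] := by
  simp [h]

lemma mem_concat_iff {α : Type*} {l : List α} {a b : α} : a ∈ l ++ [b] ↔ a ∈ l ∨ a = b := by
  simp

/-- Appending two paths whose supports meet only at the junction yields a path. -/
lemma path_append {H : SimpleGraph V} {a x b : V} {p : H.Walk a x} {q : H.Walk x b}
    (hp : p.IsPath) (hq : q.IsPath)
    (hdisj : ∀ y ∈ p.support, y ∈ q.support → y = x) : (p.append q).IsPath := by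
  rw [Walk.isPath_def, Walk.support_append, List.nodup_append]
  have hqn := hq.support_nodup
  rw [q.support_eq_cons] at hqn
  rcases List.nodup_cons.mp hqn with ⟨hxt, htn⟩
  refine ⟨hp.support_nodup, htn, ?_⟩
  intro y hyp z hyt hyz
  rw [← hyz] at hyt
  have hyq : y ∈ q.support := by rw [q.support_eq_cons]; exact List.mem_cons_of_mem _ hyt
  have : y = x := hdisj y hyp hyq
  exact hxt (this ▸ hyt)

/-- In a path `p : a → c`, the prefix up to `b ≠ c` does not contain `c`. -/
lemma endpoint_not_mem_takeUntil [DecidableEq V] {H : SimpleGraph V} {a c b : V} {p : H.Walk a c}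
    (hp : p.IsPath) (hb : b ∈ p.support) (hbc : b ≠ c) :
    c ∉ (p.takeUntil b hb).support := by
  classical
  intro hc
  have hnodup := hp.support_nodup
  rw [← p.take_spec hb, Walk.support_append, List.nodup_append] at hnodup
  have hcd : c ∈ (p.dropUntil b hb).support := (p.dropUntil b hb).end_mem_support
  rw [(p.dropUntil b hb).support_eq_cons] at hcd
  rcases List.mem_cons.mp hcd with hcd | hcd
  · exact hbc hcd.symm
  · exact hnodup.2.2 c hc c hcd rfl

/-- First vertex of a walk that belongs to a set `S` containing the endpoint. -/
lemma first_hit {H : SimpleGraph V} (S : Set V) :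
    ∀ {b a : V} (p : H.Walk b a), a ∈ S →
      ∃ x, x ∈ S ∧ ∃ q : H.Walk b x, (∀ y ∈ q.support, y ∈ p.support) ∧
        ∀ y ∈ q.support, y ∈ S → y = x := by
  intro b a p
  induction p with
  | nil =>
    intro h
    exact ⟨_, h, Walk.nil, by simp, by simp +contextual⟩
  | @cons s m t h p ih =>
    intro htS
    by_cases hs : s ∈ S
    · refine ⟨s, hs, Walk.nil, by simp, by simp +contextual⟩
    · obtain ⟨x, hx, q, hsub, hcond⟩ := ih htS
      refine ⟨x, hx, Walk.cons h q, ?_, ?_⟩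
      · intro y hy
        simp only [Walk.support_cons, List.mem_cons] at hy ⊢
        rcases hy with hy | hy
        · exact Or.inl hy
        · exact Or.inr (hsub y hy)
      · intro y hy hyS
        simp only [Walk.support_cons, List.mem_cons] at hy
        rcases hy with rfl | hy
        · exact absurd hyS hs
        · exact hcond y hy hyS

/-- The adjacent case of Whitney's theorem. -/
lemma whitney_adj {H : SimpleGraph V}
    (hnc : ∀ w a b : V, a ≠ w → b ≠ w → ∃ p : H.Walk a b, ∀ x ∈ p.support, x ≠ w)
    (h3 : ∀ a b : V, ∃ c, c ≠ a ∧ c ≠ b) {a b : V} (hab : H.Adj a b) :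
    ∃ p q : H.Walk a b, p.IsPath ∧ q.IsPath ∧ p ≠ q ∧
      ∀ w, w ∈ p.support → w ∈ q.support → w = a ∨ w = b := by
  classical
  obtain ⟨c, hca, hcb⟩ := h3 a b
  obtain ⟨Q1, hQ1⟩ := hnc b c a hcb hab.ne
  obtain ⟨Q2, hQ2⟩ := hnc a c b hca (Ne.symm hab.ne)
  set W : H.Walk a b := Q1.reverse.append Q2 with hW
  refine ⟨Walk.cons hab Walk.nil, W.bypass, ?_, W.bypass_isPath, ?_, ?_⟩
  · simp [Walk.isPath_def, hab.ne]
  · intro hEq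
    have hmem : s(a, b) ∈ W.bypass.edges := by
      rw [← hEq]; simp
    have hmem' : s(a, b) ∈ W.edges := W.edges_bypass_subset hmem
    rw [hW, Walk.edges_append, List.mem_append] at hmem'
    rcases hmem' with hm | hm
    · rw [Walk.edges_reverse, List.mem_reverse] at hm
      exact hQ1 b (Q1.snd_mem_support_of_mem_edges hm) rfl
    · exact hQ2 a (Q2.fst_mem_support_of_mem_edges hm) rfl
  · intro w hw _
    simpa using hw

/-- The case of Whitney's induction where `b` lies on one of the two paths. -/
lemma whitney_onpath {H : SimpleGraph V} {a b c : V} (hbc : b ≠ c)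
    (P₁ P₂ : H.Walk a c) (h1 : P₁.IsPath) (h2 : P₂.IsPath)
    (hd : ∀ w ∈ P₁.support, w ∈ P₂.support → w = a ∨ w = c)
    (hb1 : b ∈ P₁.support) (hb2 : b ∉ P₂.support) (hcb : H.Adj c b) :
    ∃ p q : H.Walk a b, p.IsPath ∧ q.IsPath ∧ p ≠ q ∧
      ∀ w, w ∈ p.support → w ∈ q.support → w = a ∨ w = b := by
  classical
  have hcnot : c ∉ (P₁.takeUntil b hb1).support := endpoint_not_mem_takeUntil h1 hb1 hbc
  have hconc : (P₂.concat hcb).IsPath := by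
    refine path_append h2 ?_ ?_
    · simp [Walk.isPath_def, hcb.ne]
    · intro y hy hy'
      simp only [Walk.support_cons, Walk.support_nil, List.mem_cons, List.mem_singleton,
        List.not_mem_nil, or_false] at hy'
      rcases hy' with h | h
      · exact h
      · exact absurd (h ▸ hy) hb2
  refine ⟨P₁.takeUntil b hb1, P₂.concat hcb, h1.takeUntil hb1, hconc, ?_, ?_⟩
  · intro hEq
    have : c ∈ (P₂.concat hcb).support := by
      rw [Walk.support_concat]
      exact mem_concat_left P₂.end_mem_support
    rw [← hEq] at this
    exact hcnot this
  · intro w hw1 hw2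
    rw [Walk.support_concat, mem_concat_iff] at hw2
    rcases hw2 with hw2 | hw2
    · have hwP1 : w ∈ P₁.support := P₁.support_takeUntil_subset hb1 hw1
      rcases hd w hwP1 hw2 with h | h
      · exact Or.inl h
      · exact absurd (h ▸ hw1) hcnot
    · exact Or.inr hw2

/-- The main case of Whitney's induction. -/
lemma whitney_offpath {H : SimpleGraph V} {a b c x : V} (hbc : b ≠ c)
    (P₁ P₂ : H.Walk a c) (h1 : P₁.IsPath) (h2 : P₂.IsPath)
    (hd : ∀ w ∈ P₁.support, w ∈ P₂.support → w = a ∨ w = c)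
    (hb1 : b ∉ P₁.support) (hb2 : b ∉ P₂.support) (hcb : H.Adj c b)
    (q : H.Walk x b) (hq : q.IsPath) (hx1 : x ∈ P₁.support)
    (hqc : ∀ y ∈ q.support, y ≠ c)
    (hqS : ∀ y ∈ q.support, (y ∈ P₁.support ∨ y ∈ P₂.support) → y = x) :
    ∃ p q' : H.Walk a b, p.IsPath ∧ q'.IsPath ∧ p ≠ q' ∧
      ∀ w, w ∈ p.support → w ∈ q'.support → w = a ∨ w = b := by
  classical
  have hxc : x ≠ c := hqc x q.start_mem_support
  have hcT : c ∉ (P₁.takeUntil x hx1).support := endpoint_not_mem_takeUntil h1 hx1 hxc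
  have hAp : ((P₁.takeUntil x hx1).append q).IsPath := by
    refine path_append (h1.takeUntil hx1) hq ?_
    intro y hy hy'
    exact hqS y hy' (Or.inl (P₁.support_takeUntil_subset hx1 hy))
  have hconc : (P₂.concat hcb).IsPath := by
    refine path_append h2 ?_ ?_
    · simp [Walk.isPath_def, hcb.ne]
    · intro y hy hy'
      simp only [Walk.support_cons, Walk.support_nil, List.mem_cons, List.mem_singleton,
        List.not_mem_nil, or_false] at hy'
      rcases hy' with h | h
      · exact h
      · exact absurd (h ▸ hy) hb2
  refine ⟨(P₁.takeUntil x hx1).append q, P₂.concat hcb, hAp, hconc, ?_, ?_⟩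
  · intro hEq
    have hcB : c ∈ (P₂.concat hcb).support := by
      rw [Walk.support_concat]
      exact mem_concat_left P₂.end_mem_support
    rw [← hEq, Walk.mem_support_append_iff] at hcB
    rcases hcB with h | h
    · exact hcT h
    · exact hqc c h rfl
  · intro w hw1 hw2
    rw [Walk.mem_support_append_iff] at hw1
    rw [Walk.support_concat, mem_concat_iff] at hw2
    rcases hw2 with hw2 | hw2
    · rcases hw1 with hw1 | hw1
      · have hwP1 : w ∈ P₁.support := P₁.support_takeUntil_subset hx1 hw1
        rcases hd w hwP1 hw2 with h | h
        · exact Or.inl h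
        · exact absurd (h ▸ hw1) hcT
      · have hwx : w = x := hqS w hw1 (Or.inr hw2)
        subst hwx
        rcases hd w hx1 hw2 with h | h
        · exact Or.inl h
        · exact absurd h hxc
    · exact Or.inr hw2

/-- Whitney's theorem: connected, no cut vertex, at least three vertices implies
two internally disjoint paths between any two distinct vertices. -/
lemma whitney {H : SimpleGraph V} (hconn : H.Connected)
    (hnc : ∀ w a b : V, a ≠ w → b ≠ w → ∃ p : H.Walk a b, ∀ x ∈ p.support, x ≠ w)
    (h3 : ∀ a b : V, ∃ c, c ≠ a ∧ c ≠ b) :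
    TwoConnected H := by
  classical
  intro a b hab
  suffices key : ∀ n a b, a ≠ b → H.dist a b = n →
      ∃ p q : H.Walk a b, p.IsPath ∧ q.IsPath ∧ p ≠ q ∧
        ∀ w, w ∈ p.support → w ∈ q.support → w = a ∨ w = b by
    exact key _ a b hab rfl
  intro n
  induction n using Nat.strong_induction_on with
  | _ n ih =>
    intro a b hab hdist
    have hreach : H.Reachable a b := hconn.preconnected a b
    have hn1 : 1 ≤ n := by
      have := hreach.pos_dist_of_ne hab
      omega
    obtain ⟨r, hr⟩ : ∃ r : H.Walk b a, r.length = n := by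
      obtain ⟨p, hp⟩ := hreach.exists_walk_length_eq_dist
      exact ⟨p.reverse, by rw [Walk.length_reverse, hp, hdist]⟩
    cases r with
    | nil => exact absurd rfl (Ne.symm hab)
    | @cons _ m _ h q =>
      rw [Walk.length_cons] at hr
      by_cases hma : m = a
      · subst hma
        exact whitney_adj hnc h3 h.symm
      · have ham : a ≠ m := Ne.symm hma
        have hd1 : H.dist a m ≤ n - 1 := by
          have := H.dist_le q.reverse
          rw [Walk.length_reverse] at this
          omega
        have hd2 : H.dist a b ≤ H.dist a m + H.dist m b :=
          hconn.dist_triangle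
        have hd3 : H.dist m b ≤ 1 := by
          have := H.dist_le (Walk.cons h.symm Walk.nil)
          simpa using this
        have hdam : H.dist a m = n - 1 := by omega
        obtain ⟨P₁, P₂, h1, h2, hne, hdisj⟩ := ih (n - 1) (by omega) a m ham hdam
        have hbm : b ≠ m := h.ne
        by_cases hbP : b ∈ P₁.support ∨ b ∈ P₂.support
        · have hnotboth : ¬ (b ∈ P₁.support ∧ b ∈ P₂.support) := by
            rintro ⟨hb1, hb2⟩
            rcases hdisj b hb1 hb2 with h' | h'
            · exact hab h'.symm
            · exact hbm h'
          rcases hbP with hb1 | hb2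
          · have hb2 : b ∉ P₂.support := fun h' => hnotboth ⟨hb1, h'⟩
            exact whitney_onpath hbm P₁ P₂ h1 h2 hdisj hb1 hb2 h.symm
          · have hb1 : b ∉ P₁.support := fun h' => hnotboth ⟨h', hb2⟩
            exact whitney_onpath hbm P₂ P₁ h2 h1
              (fun w hw hw' => hdisj w hw' hw) hb2 hb1 h.symm
        · push_neg at hbP
          obtain ⟨hb1, hb2⟩ := hbP
          obtain ⟨B, hB⟩ := hnc m a b ham hbm
          obtain ⟨x, hxS, q0, hq0sub, hq0cond⟩ :=
            first_hit {y | y ∈ P₁.support ∨ y ∈ P₂.support} B.reverse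
              (Or.inl P₁.start_mem_support)
          set qq : H.Walk x b := q0.bypass.reverse with hqq
          have hqqsup : ∀ y ∈ qq.support, y ∈ q0.support := by
            intro y hy
            rw [hqq, Walk.support_reverse, List.mem_reverse] at hy
            exact q0.support_bypass_subset hy
          have hqqB : ∀ y ∈ qq.support, y ∈ B.support := by
            intro y hy
            have := hq0sub y (hqqsup y hy)
            rwa [Walk.support_reverse, List.mem_reverse] at this
          have hqc : ∀ y ∈ qq.support, y ≠ m := fun y hy => hB y (hqqB y hy)
          have hqS : ∀ y ∈ qq.support, (y ∈ P₁.support ∨ y ∈ P₂.support) → y = x :=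
            fun y hy hyS => hq0cond y (hqqsup y hy) hyS
          have hqqpath : qq.IsPath := q0.bypass_isPath.reverse
          rcases hxS with hx1 | hx2
          · exact whitney_offpath hbm P₁ P₂ h1 h2 hdisj hb1 hb2 h.symm
              qq hqqpath hx1 hqc hqS
          · exact whitney_offpath hbm P₂ P₁ h2 h1
              (fun w hw hw' => hdisj w hw' hw) hb2 hb1 h.symm
              qq hqqpath hx2 hqc (fun y hy hyS => hqS y hy hyS.symm)

/-- A detour from `u` to `v` not using the edge `uv`, staying (apart from its ends)
in the set of vertices reachable from `s₀` avoiding `u` and `v`. -/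
lemma exists_detour {G : SimpleGraph V} {u v s₀ t₀ : V} (hne : u ≠ v)
    (hnc : ∀ w a b : V, a ≠ w → b ≠ w → ∃ p : G.Walk a b, ∀ x ∈ p.support, x ≠ w)
    (hs : s₀ ≠ u ∧ s₀ ≠ v) (ht : t₀ ≠ u ∧ t₀ ≠ v)
    (hsep : ¬ ∃ p : G.Walk s₀ t₀, ∀ x ∈ p.support, x ≠ u ∧ x ≠ v) :
    ∃ D : G.Walk u v, s(u, v) ∉ D.edges ∧
      ∀ y ∈ D.support,
        (∃ p : G.Walk s₀ y, ∀ x ∈ p.support, x ≠ u ∧ x ≠ v) ∨ y = u ∨ y = v := by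
  set A : V → Prop := fun y => ∃ p : G.Walk s₀ y, ∀ x ∈ p.support, x ≠ u ∧ x ≠ v with hA
  have hAs : A s₀ := ⟨Walk.nil, by simp [hs.1, hs.2]⟩
  have hAu : ¬ A u := fun ⟨p, hp⟩ => (hp u p.end_mem_support).1 rfl
  have hAv : ¬ A v := fun ⟨p, hp⟩ => (hp v p.end_mem_support).2 rfl
  have hAt : ¬ A t₀ := hsep
  have htrans : ∀ {y z : V}, A y → G.Adj y z → z ≠ u → z ≠ v → A z := by
    rintro y z ⟨p, hp⟩ hyz hzu hzv
    refine ⟨p.concat hyz, ?_⟩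
    intro x hx
    rw [Walk.support_concat, mem_concat_iff] at hx
    rcases hx with hx | hx
    · exact hp x hx
    · exact hx ▸ ⟨hzu, hzv⟩
  have first_exit : ∀ {s t : V} (p : G.Walk s t), A s → ¬ A t →
      ∃ z, (z = u ∨ z = v) ∧ ∃ qz : G.Walk s z,
        (∀ y ∈ qz.support, y ≠ z → A y) ∧ ∀ y ∈ qz.support, y ∈ p.support := by
    intro s t p
    induction p with
    | nil => intro h1 h2; exact absurd h1 h2
    | @cons s m t h p ih =>
      intro h1 h2
      by_cases hm : m = u ∨ m = v
      · refine ⟨m, hm, Walk.cons h Walk.nil, ?_, ?_⟩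
        · intro y hy hym
          simp only [Walk.support_cons, Walk.support_nil, List.mem_cons,
            List.mem_singleton, List.not_mem_nil, or_false] at hy
          rcases hy with hy | hy
          · exact hy ▸ h1
          · exact absurd hy hym
        · intro y hy
          simp only [Walk.support_cons, Walk.support_nil, List.mem_cons,
            List.not_mem_nil, or_false] at hy
          simp only [Walk.support_cons, List.mem_cons]
          rcases hy with hy | hy
          · exact Or.inl hy
          · exact Or.inr (hy ▸ p.start_mem_support)
      · push_neg at hm
        have hAm : A m := htrans h1 h hm.1 hm.2
        obtain ⟨z, hz, qz, hq1, hq2⟩ := ih hAm h2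
        refine ⟨z, hz, Walk.cons h qz, ?_, ?_⟩
        · intro y hy hyz
          simp only [Walk.support_cons, List.mem_cons] at hy
          rcases hy with rfl | hy
          · exact h1
          · exact hq1 y hy hyz
        · intro y hy
          simp only [Walk.support_cons, List.mem_cons] at hy ⊢
          rcases hy with hy | hy
          · exact Or.inl hy
          · exact Or.inr (hq2 y hy)
  obtain ⟨pa, hpa⟩ := hnc v s₀ t₀ hs.2 ht.2
  obtain ⟨z1, hz1, q1, hq1A, hq1sub⟩ := first_exit pa hAs hAt
  have hz1u : z1 = u := by
    rcases hz1 with h' | h'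
    · exact h'
    · exact absurd h' (by
        intro hh
        exact hpa z1 (hq1sub z1 q1.end_mem_support) hh)
  subst z1
  obtain ⟨pb, hpb⟩ := hnc u s₀ t₀ hs.1 ht.1
  obtain ⟨z2, hz2, q2, hq2A, hq2sub⟩ := first_exit pb hAs hAt
  have hz2v : z2 = v := by
    rcases hz2 with h' | h'
    · exact absurd h' (by
        intro hh
        exact hpb z2 (hq2sub z2 q2.end_mem_support) hh)
    · exact h'
  subst z2
  have hvq1 : v ∉ q1.support := by
    intro hv
    exact hAv (hq1A v hv hne.symm)
  have huq2 : u ∉ q2.support := by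
    intro hu
    exact hAu (hq2A u hu hne)
  refine ⟨q1.reverse.append q2, ?_, ?_⟩
  · intro hmem
    rw [Walk.edges_append, List.mem_append] at hmem
    rcases hmem with hm | hm
    · rw [Walk.edges_reverse, List.mem_reverse] at hm
      exact hvq1 (q1.snd_mem_support_of_mem_edges hm)
    · exact huq2 (q2.fst_mem_support_of_mem_edges hm)
  · intro y hy
    rw [Walk.mem_support_append_iff] at hy
    rcases hy with hy | hy
    · rw [Walk.support_reverse, List.mem_reverse] at hy
      by_cases hyu : y = u
      · exact Or.inr (Or.inl hyu)
      · exact Or.inl (hq1A y hy hyu)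
    · by_cases hyv : y = v
      · exact Or.inr (Or.inr hyv)
      · exact Or.inl (hq2A y hy hyv)

/-- Replace each use of the edge `uv` in a `G`-walk by a detour, obtaining
a walk in `G.deleteEdges {s(u,v)}`. -/
lemma walk_delete_of_walk {G : SimpleGraph V} {u v : V}
    (D : G.Walk u v) (hD : s(u, v) ∉ D.edges) :
    ∀ {a b : V} (p : G.Walk a b),
      ∃ q : (G.deleteEdges {s(u, v)}).Walk a b,
        ∀ y ∈ q.support, y ∈ p.support ∨ y ∈ D.support := by
  have hDtrans : ∀ e ∈ D.edges, e ∈ (G.deleteEdges {s(u, v)}).edgeSet := by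
    intro e he
    rw [edgeSet_deleteEdges, Set.mem_diff]
    refine ⟨D.edges_subset_edgeSet he, ?_⟩
    intro h'
    rw [Set.mem_singleton_iff] at h'
    exact hD (h' ▸ he)
  set D' : (G.deleteEdges {s(u, v)}).Walk u v := D.transfer _ hDtrans with hD'
  have hD'sup : D'.support = D.support := Walk.support_transfer _ _
  intro a b p
  induction p with
  | nil => exact ⟨Walk.nil, by simp⟩
  | @cons s m t h p ih =>
    obtain ⟨q', hq'⟩ := ih
    by_cases he : s(s, m) = s(u, v)
    · rw [Sym2.eq_iff] at he
      rcases he with ⟨rfl, rfl⟩ | ⟨rfl, rfl⟩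
      · refine ⟨D'.append q', ?_⟩
        intro y hy
        rw [Walk.mem_support_append_iff] at hy
        rcases hy with hy | hy
        · exact Or.inr (hD'sup ▸ hy)
        · rcases hq' y hy with hy' | hy'
          · exact Or.inl (by simp only [Walk.support_cons, List.mem_cons]; exact Or.inr hy')
          · exact Or.inr hy'
      · refine ⟨D'.reverse.append q', ?_⟩
        intro y hy
        rw [Walk.mem_support_append_iff] at hy
        rcases hy with hy | hy
        · rw [Walk.support_reverse, List.mem_reverse, hD'sup] at hy
          exact Or.inr hy
        · rcases hq' y hy with hy' | hy'
          · exact Or.inl (by simp only [Walk.support_cons, List.mem_cons]; exact Or.inr hy')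
          · exact Or.inr hy'
    · refine ⟨Walk.cons (deleteEdges_adj.mpr ⟨h, by simpa using he⟩) q', ?_⟩
      intro y hy
      simp only [Walk.support_cons, List.mem_cons] at hy
      rcases hy with rfl | hy
      · exact Or.inl (Walk.start_mem_support _)
      · rcases hq' y hy with hy' | hy'
        · exact Or.inl (by simp only [Walk.support_cons, List.mem_cons]; exact Or.inr hy')
        · exact Or.inr hy'

end AuxSep

/-- Removing a separating link from a biconnected graph leaves a 2-vertex-connected graph. -/
theorem sepLink_delete_twoConnected {V : Type} (G : SimpleGraph V) (u v : V)
    (hG : Biconnected G) (he : SepLink G s(u, v)) :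
    TwoConnected (G.deleteEdges {s(u, v)}) := by
  classical
  obtain ⟨hconn, hncRA⟩ := hG
  obtain ⟨heE, a₀, b₀, ha₀, hb₀, hsepRA⟩ := he
  have huv : G.Adj u v := heE
  have hnc : ∀ w a b : V, a ≠ w → b ≠ w → ∃ p : G.Walk a b, ∀ x ∈ p.support, x ≠ w := by
    intro w a b h1 h2
    obtain ⟨p, hp⟩ := hncRA w a b h1 h2
    exact ⟨p, fun x hx => by simpa using hp x hx⟩
  have ha₀' : a₀ ≠ u ∧ a₀ ≠ v := by
    rw [Sym2.mem_iff] at ha₀; tauto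
  have hb₀' : b₀ ≠ u ∧ b₀ ≠ v := by
    rw [Sym2.mem_iff] at hb₀; tauto
  have hsep : ¬ ∃ p : G.Walk a₀ b₀, ∀ x ∈ p.support, x ≠ u ∧ x ≠ v := by
    rintro ⟨p, hp⟩
    refine hsepRA ⟨p, fun x hx => ?_⟩
    simp only [Set.mem_setOf_eq, Sym2.mem_iff]
    push_neg
    exact hp x hx
  have hsep' : ¬ ∃ p : G.Walk b₀ a₀, ∀ x ∈ p.support, x ≠ u ∧ x ≠ v := by
    rintro ⟨p, hp⟩
    refine hsep ⟨p.reverse, fun x hx => ?_⟩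
    rw [SimpleGraph.Walk.support_reverse, List.mem_reverse] at hx
    exact hp x hx
  have hab₀ : a₀ ≠ b₀ := by
    rintro rfl
    exact hsep ⟨SimpleGraph.Walk.nil, by simp [ha₀'.1, ha₀'.2]⟩
  obtain ⟨D1, hD1e, hD1s⟩ := AuxSep.exists_detour huv.ne hnc ha₀' hb₀' hsep
  obtain ⟨D2, hD2e, hD2s⟩ := AuxSep.exists_detour huv.ne hnc hb₀' ha₀' hsep'
  set H := G.deleteEdges {s(u, v)} with hH
  have hncH : ∀ w a b : V, a ≠ w → b ≠ w → ∃ p : H.Walk a b, ∀ x ∈ p.support, x ≠ w := by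
    intro w a b haw hbw
    by_cases hwu : w = u
    · subst hwu
      obtain ⟨p, hp⟩ := hnc w a b haw hbw
      have hpe : ∀ e ∈ p.edges, e ∈ H.edgeSet := by
        intro e hee
        rw [hH, edgeSet_deleteEdges, Set.mem_diff]
        refine ⟨p.edges_subset_edgeSet hee, ?_⟩
        intro h'
        rw [Set.mem_singleton_iff] at h'
        subst h'
        exact hp w (p.fst_mem_support_of_mem_edges hee) rfl
      refine ⟨p.transfer H hpe, ?_⟩
      intro x hx
      rw [SimpleGraph.Walk.support_transfer] at hx
      exact hp x hx
    · by_cases hwv : w = v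
      · subst hwv
        obtain ⟨p, hp⟩ := hnc w a b haw hbw
        have hpe : ∀ e ∈ p.edges, e ∈ H.edgeSet := by
          intro e hee
          rw [hH, edgeSet_deleteEdges, Set.mem_diff]
          refine ⟨p.edges_subset_edgeSet hee, ?_⟩
          intro h'
          rw [Set.mem_singleton_iff] at h'
          subst h'
          exact hp w (p.snd_mem_support_of_mem_edges hee) rfl
        refine ⟨p.transfer H hpe, ?_⟩
        intro x hx
        rw [SimpleGraph.Walk.support_transfer] at hx
        exact hp x hx
      · -- w ∉ {u, v}: reroute through a detour avoiding w
        obtain ⟨p, hp⟩ := hnc w a b haw hbw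
        by_cases hAw : ∃ pw : G.Walk a₀ w, ∀ x ∈ pw.support, x ≠ u ∧ x ≠ v
        · -- use detour from b₀'s side
          have hwD2 : w ∉ D2.support := by
            intro hw
            rcases hD2s w hw with hB | h' | h'
            · obtain ⟨p1, hp1⟩ := hAw
              obtain ⟨p2, hp2⟩ := hB
              refine hsep ⟨p1.append p2.reverse, ?_⟩
              intro x hx
              rw [SimpleGraph.Walk.mem_support_append_iff] at hx
              rcases hx with hx | hx
              · exact hp1 x hx
              · rw [SimpleGraph.Walk.support_reverse, List.mem_reverse] at hx
                exact hp2 x hx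
            · exact hwu h'
            · exact hwv h'
          obtain ⟨q, hq⟩ := AuxSep.walk_delete_of_walk D2 hD2e p
          refine ⟨q, ?_⟩
          intro x hx
          rcases hq x hx with hx' | hx'
          · exact hp x hx'
          · intro hxw
            exact hwD2 (hxw ▸ hx')
        · have hwD1 : w ∉ D1.support := by
            intro hw
            rcases hD1s w hw with hA | h' | h'
            · exact hAw hA
            · exact hwu h'
            · exact hwv h'
          obtain ⟨q, hq⟩ := AuxSep.walk_delete_of_walk D1 hD1e p
          refine ⟨q, ?_⟩
          intro x hx
          rcases hq x hx with hx' | hx'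
          · exact hp x hx'
          · intro hxw
            exact hwD1 (hxw ▸ hx')
  have h3 : ∀ a b : V, ∃ c, c ≠ a ∧ c ≠ b := by
    intro a b
    by_cases h1 : u ≠ a ∧ u ≠ b
    · exact ⟨u, h1⟩
    · by_cases h2 : v ≠ a ∧ v ≠ b
      · exact ⟨v, h2⟩
      · push_neg at h1 h2
        refine ⟨a₀, ?_, ?_⟩
        · intro hh
          subst hh
          by_cases hua : u = a₀
          · exact ha₀'.1 hua.symm
          · have hv : v = a₀ := by
              by_cases hva : v = a₀
              · exact hva
              · exfalso
                have hub : u = b := by tauto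
                have hvb : v = b := by tauto
                exact huv.ne (hub.trans hvb.symm)
            exact ha₀'.2 hv.symm
        · intro hh
          subst hh
          by_cases hub : u = a₀
          · exact ha₀'.1 hub.symm
          · have hv : v = a₀ := by
              by_cases hvb : v = a₀
              · exact hvb
              · exfalso
                have hua : u = a := by tauto
                have hva : v = a := by tauto
                exact huv.ne (hua.trans hva.symm)
            exact ha₀'.2 hv.symm
  have hconnH : H.Connected := by
    rw [connected_iff]
    refine ⟨?_, ⟨u⟩⟩
    intro a b
    by_cases hab : a = b
    · exact hab ▸ SimpleGraph.Reachable.refl a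
    · obtain ⟨c, hca, hcb⟩ := h3 a b
      obtain ⟨q, _⟩ := hncH c a b (Ne.symm hca) (Ne.symm hcb)
      exact ⟨q⟩
  exact AuxSep.whitney hconnH hncH h3
end

section
/- Let G be a biconnected graph, f a separating link, and e ≠ f a link such that e is separating in G \ f. Then e is also separating in G. -/
open SimpleGraph

namespace SepAux

variable {V : Type} {G : SimpleGraph V} {s : Set V}

lemma reach_symm {a b : V} (h : ReachAvoiding G s a b) : ReachAvoiding G s b a := by
  obtain ⟨p, hp⟩ := h
  exact ⟨p.reverse, by simpa using hp⟩

lemma reach_trans {a b c : V} (h1 : ReachAvoiding G s a b) (h2 : ReachAvoiding G s b c) :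
    ReachAvoiding G s a c := by
  obtain ⟨p, hp⟩ := h1
  obtain ⟨q, hq⟩ := h2
  refine ⟨p.append q, fun z hz => ?_⟩
  rcases (SimpleGraph.Walk.mem_support_append_iff _ _).1 hz with h | h
  · exact hp z h
  · exact hq z h

lemma reach_of_mem_support {a b z : V} (p : G.Walk a b) (hp : ∀ x ∈ p.support, x ∉ s)
    (hz : z ∈ p.support) : ReachAvoiding G s a z := by
  classical
  exact ⟨p.takeUntil z hz, fun x hx => hp x (p.support_takeUntil_subset hz hx)⟩

/-- Transfer a walk avoiding `s` from `G` to `G.deleteEdges {f}`, given replacements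
for the steps along `f`. -/
lemma transfer_reach (f : Sym2 V)
    (hrep : ∀ c d : V, s(c, d) = f → c ∉ s → d ∉ s →
      ReachAvoiding (G.deleteEdges {f}) s c d) :
    ∀ {a b : V}, ReachAvoiding G s a b → ReachAvoiding (G.deleteEdges {f}) s a b := by
  rintro a b ⟨p, hp⟩
  induction p with
  | nil =>
    exact ⟨SimpleGraph.Walk.nil, by simpa using hp⟩
  | @cons a c b h p ih =>
    have ha : a ∉ s := hp a (by simp)
    have hc : c ∉ s := hp c (by simp)
    have hrest : ∀ x ∈ p.support, x ∉ s := fun x hx => hp x (by simp [hx])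
    have hq := ih hrest
    have hseg : ReachAvoiding (G.deleteEdges {f}) s a c := by
      by_cases hfe : s(a, c) = f
      · exact hrep a c hfe ha hc
      · exact ⟨SimpleGraph.Walk.cons (by simp [SimpleGraph.deleteEdges_adj, h, hfe])
          SimpleGraph.Walk.nil, by simp; exact ⟨ha, hc⟩⟩
    exact reach_trans hseg hq

/-- In a biconnected graph, from a vertex `w ∉ {u,v}` one can walk to a neighbor of
`u` avoiding both `u` and `v`. (Stated reversed: a walk from a neighbor `u'` of `u`
to `w`.) -/
lemma half (hG : Biconnected G) {u v w : V} (huv : G.Adj u v)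
    (hwu : w ≠ u) (hwv : w ≠ v) :
    ∃ (u' : V) (_ : G.Adj u u') (t : G.Walk u' w),
      u ∉ t.support ∧ v ∉ t.support := by
  classical
  obtain ⟨p, hp⟩ := hG.2 v w u hwv huv.ne
  have hv_not : v ∉ p.support := fun h => hp v h rfl
  have hu_mem : u ∈ p.support := p.end_mem_support
  have hcount : (p.takeUntil u hu_mem).support.count u = 1 :=
    p.count_support_takeUntil_eq_one hu_mem
  have hvq : v ∉ (p.takeUntil u hu_mem).support :=
    fun h => hv_not (p.support_takeUntil_subset hu_mem h)
  obtain ⟨u', h', t, ht⟩ :=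
    SimpleGraph.Walk.exists_eq_cons_of_ne hwu.symm (p.takeUntil u hu_mem).reverse
  refine ⟨u', h', t, ?_, ?_⟩
  · intro hmem
    have h1 : (p.takeUntil u hu_mem).reverse.support.count u = 1 := by
      rw [SimpleGraph.Walk.support_reverse, List.count_reverse]
      exact hcount
    rw [ht, SimpleGraph.Walk.support_cons, List.count_cons_self] at h1
    have hpos : 0 < t.support.count u := List.count_pos_iff.2 hmem
    omega
  · intro hmem
    have hmem2 : v ∈ (p.takeUntil u hu_mem).reverse.support := by
      rw [ht, SimpleGraph.Walk.support_cons]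
      exact List.mem_cons_of_mem _ hmem
    rw [SimpleGraph.Walk.support_reverse, List.mem_reverse] at hmem2
    exact hvq hmem2

/-- The key construction: a `u`–`v` walk avoiding `x, y` and not using the edge
`s(u,v)`, routed through the part of `G - {u,v}` containing `w`. -/
lemma exists_detour (hG : Biconnected G) {u v x y w : V}
    (huv : G.Adj u v) (hxy : G.Adj x y)
    (hxu : x ≠ u) (hxv : x ≠ v) (hyu : y ≠ u) (hyv : y ≠ v)
    (hwu : w ≠ u) (hwv : w ≠ v)
    (hnw : ¬ ReachAvoiding G ({u, v} : Set V) x w) :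
    ∃ W : G.Walk u v, (∀ z ∈ W.support, z ≠ x ∧ z ≠ y) ∧
      ∀ ed ∈ W.edges, ed ≠ s(u, v) := by
  obtain ⟨u', hu', t, hut, hvt⟩ := half hG huv hwu hwv
  obtain ⟨v', hv', r, hvr, hur⟩ := half hG huv.symm hwv hwu
  -- every vertex on t or r is reachable from w avoiding {u, v}
  have hreach_t : ∀ z ∈ t.support, ReachAvoiding G ({u, v} : Set V) w z := by
    intro z hz
    refine reach_of_mem_support t.reverse (fun a ha => ?_)
      (by rw [SimpleGraph.Walk.support_reverse, List.mem_reverse]; exact hz)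
    rw [SimpleGraph.Walk.support_reverse, List.mem_reverse] at ha
    intro hm
    rcases Set.mem_insert_iff.1 hm with rfl | hm
    · exact hut ha
    · rw [Set.mem_singleton_iff] at hm; exact hvt (hm ▸ ha)
  have hreach_r : ∀ z ∈ r.support, ReachAvoiding G ({u, v} : Set V) w z := by
    intro z hz
    refine reach_of_mem_support r.reverse (fun a ha => ?_)
      (by rw [SimpleGraph.Walk.support_reverse, List.mem_reverse]; exact hz)
    rw [SimpleGraph.Walk.support_reverse, List.mem_reverse] at ha
    intro hm
    rcases Set.mem_insert_iff.1 hm with rfl | hm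
    · exact hur ha
    · rw [Set.mem_singleton_iff] at hm; exact hvr (hm ▸ ha)
  -- x and y are not reachable from w avoiding {u, v}
  have hnx : ¬ ReachAvoiding G ({u, v} : Set V) w x := fun h => hnw (reach_symm h)
  have hny : ¬ ReachAvoiding G ({u, v} : Set V) w y := by
    intro h
    refine hnx (reach_trans h ?_)
    refine ⟨SimpleGraph.Walk.cons hxy.symm SimpleGraph.Walk.nil, ?_⟩
    intro z hz
    simp only [SimpleGraph.Walk.support_cons, SimpleGraph.Walk.support_nil,
      List.mem_cons, List.mem_singleton] at hz
    intro hm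
    rcases Set.mem_insert_iff.1 hm with rfl | hm
    · rcases hz with h1 | h1 | h1
      · exact hyu h1.symm
      · exact hxu h1.symm
      · simp at h1
    · rw [Set.mem_singleton_iff] at hm
      subst hm
      rcases hz with h1 | h1 | h1
      · exact hyv h1.symm
      · exact hxv h1.symm
      · simp at h1
  have hxt : x ∉ t.support := fun h => hnx (hreach_t x h)
  have hyt : y ∉ t.support := fun h => hny (hreach_t y h)
  have hxr : x ∉ r.support := fun h => hnx (hreach_r x h)
  have hyr : y ∉ r.support := fun h => hny (hreach_r y h)
  -- assemble the walk u → u' → … → w → … → v' → v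
  refine ⟨SimpleGraph.Walk.cons hu' (t.append (r.reverse.concat hv'.symm)), ?_, ?_⟩
  · intro z hz
    rw [SimpleGraph.Walk.support_cons, List.mem_cons] at hz
    rcases hz with rfl | hz
    · exact ⟨fun h => hxu h.symm, fun h => hyu h.symm⟩
    rw [SimpleGraph.Walk.mem_support_append_iff] at hz
    rcases hz with hz | hz
    · exact ⟨fun h => hxt (h ▸ hz), fun h => hyt (h ▸ hz)⟩
    · rw [SimpleGraph.Walk.support_concat, List.mem_append,
        SimpleGraph.Walk.support_reverse, List.mem_reverse] at hz
      rcases hz with hz | hz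
      · exact ⟨fun h => hxr (h ▸ hz), fun h => hyr (h ▸ hz)⟩
      · rw [List.mem_singleton] at hz
        subst hz
        exact ⟨fun h => hxv h.symm, fun h => hyv h.symm⟩
  · intro ed hed
    rw [SimpleGraph.Walk.edges_cons, List.mem_cons] at hed
    rcases hed with rfl | hed
    · intro h
      rw [Sym2.eq_iff] at h
      rcases h with ⟨-, rfl⟩ | ⟨h1, -⟩
      · exact hvt t.start_mem_support
      · exact huv.ne h1
    rw [SimpleGraph.Walk.edges_append, List.mem_append] at hed
    rcases hed with hed | hed
    · rintro rfl
      exact hut (t.fst_mem_support_of_mem_edges hed)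
    · rw [SimpleGraph.Walk.edges_concat, List.concat_eq_append, List.mem_append,
        SimpleGraph.Walk.edges_reverse, List.mem_reverse] at hed
      rcases hed with hed | hed
      · rintro rfl
        exact hur (r.fst_mem_support_of_mem_edges hed)
      · rw [List.mem_singleton] at hed
        subst hed
        intro h
        rw [Sym2.eq_iff] at h
        rcases h with ⟨rfl, -⟩ | ⟨-, h2⟩
        · exact hur r.start_mem_support
        · exact huv.ne h2.symm

lemma main_aux {V : Type} (G : SimpleGraph V) (x y u v : V)
    (hG : Biconnected G) (hf : SepLink G s(u, v))
    (he : SepLink (G.deleteEdges {s(u, v)}) s(x, y)) :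
    SepLink G s(x, y) := by
  obtain ⟨hfE, a0, b0, ha0, hb0, hnab0⟩ := hf
  obtain ⟨heE', a, b, ha, hb, hnab⟩ := he
  have huv : G.Adj u v := hfE
  have heE : s(x, y) ∈ G.edgeSet := by
    rw [SimpleGraph.edgeSet_deleteEdges] at heE'
    exact heE'.1
  have hxy : G.Adj x y := heE
  have hsetf : {z | z ∈ s(u, v)} = ({u, v} : Set V) := by
    ext z; simp [Sym2.mem_iff]
  rw [hsetf] at hnab0
  refine ⟨heE, a, b, ha, hb, fun hR => hnab ?_⟩
  refine transfer_reach s(u, v) ?_ hR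
  have main : ∀ cS : u ∉ {z | z ∈ s(x, y)}, ∀ dS : v ∉ {z | z ∈ s(x, y)},
      ReachAvoiding (G.deleteEdges {s(u, v)}) {z | z ∈ s(x, y)} u v := by
    intro hcS hdS
    simp only [Set.mem_setOf_eq, Sym2.mem_iff, not_or] at hcS hdS
    obtain ⟨hux, huy⟩ := hcS
    obtain ⟨hvx, hvy⟩ := hdS
    have hw : ∃ w : V, w ≠ u ∧ w ≠ v ∧ ¬ ReachAvoiding G ({u, v} : Set V) x w := by
      by_cases h1 : ReachAvoiding G ({u, v} : Set V) x a0
      · refine ⟨b0, ?_, ?_, fun h2 => hnab0 (reach_trans (reach_symm h1) h2)⟩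
        · intro h; exact hb0 (by simp [h])
        · intro h; exact hb0 (by simp [h])
      · refine ⟨a0, ?_, ?_, h1⟩
        · intro h; exact ha0 (by simp [h])
        · intro h; exact ha0 (by simp [h])
    obtain ⟨w, hwu, hwv, hnw⟩ := hw
    obtain ⟨W, hWsupp, hWed⟩ := exists_detour hG huv hxy (Ne.symm hux) (Ne.symm hvx)
      (Ne.symm huy) (Ne.symm hvy) hwu hwv hnw
    refine ⟨W.toDeleteEdges {s(u, v)} (fun ed hed => by simpa using hWed ed hed), ?_⟩
    intro z hz
    rw [SimpleGraph.Walk.toDeleteEdges, SimpleGraph.Walk.support_transfer] at hz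
    simp only [Set.mem_setOf_eq, Sym2.mem_iff, not_or]
    exact ⟨(hWsupp z hz).1, (hWsupp z hz).2⟩
  intro c d hcd hcS hdS
  rw [Sym2.eq_iff] at hcd
  rcases hcd with ⟨rfl, rfl⟩ | ⟨rfl, rfl⟩
  · exact main hcS hdS
  · exact reach_symm (main hdS hcS)

end SepAux

/-- If a link is separating after removing a separating link of a biconnected graph,
then it was already separating in the original graph. -/
theorem sepLink_of_sepLink_delete {V : Type} (G : SimpleGraph V) (e f : Sym2 V)
    (hG : Biconnected G) (hf : SepLink G f) (hef : e ≠ f)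
    (he : SepLink (G.deleteEdges {f}) e) :
    SepLink G e := by
  obtain ⟨x, y, rfl⟩ : ∃ x y : V, e = s(x, y) := by
    induction e using Sym2.ind with
    | _ x y => exact ⟨x, y, rfl⟩
  obtain ⟨u, v, rfl⟩ : ∃ u v : V, f = s(u, v) := by
    induction f using Sym2.ind with
    | _ u v => exact ⟨u, v, rfl⟩
  exact SepAux.main_aux G x y u v hG hf he
end

section
/- Let G be a 2-vertex-connected graph with a distinguished vertex t, and let e, f be links of G. If f is separated from t by e (i.e., some endpoint of f lies in a connected component of G minus the endpoints of e that does not contain t), then e is not separated from t by f. -/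
open SimpleGraph

/-- `LinkSep G t e f` : the link `f` (not incident to `t`) is separated from `t` by the
link `e`, i.e. some endpoint of `f` outside `e` lies in a component of `G` minus the
endpoints of `e` that does not contain `t`. -/
def LinkSep {V : Type} (G : SimpleGraph V) (t : V) (e f : Sym2 V) : Prop :=
  e ∈ G.edgeSet ∧ f ∈ G.edgeSet ∧ e ≠ f ∧ t ∉ e ∧
  ∃ w, w ∈ f ∧ w ∉ e ∧ ¬ ReachAvoiding G {x | x ∈ e} w t

lemma start_not_mem_dropUntil {V : Type} [DecidableEq V] {G : SimpleGraph V} {w t z : V}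
    {p : G.Walk w t} (hp : p.IsPath) (hz : z ∈ p.support) (hne : w ≠ z) :
    w ∉ (p.dropUntil z hz).support := by
  intro hw
  have hspec := p.take_spec hz
  have hnd : p.support.Nodup := hp.support_nodup
  rw [← hspec, Walk.support_append] at hnd
  have hdisj := List.disjoint_of_nodup_append hnd
  have hw1 : w ∈ (p.takeUntil z hz).support := Walk.start_mem_support _
  have hw2 : w ∈ (p.dropUntil z hz).support.tail := by
    have := (p.dropUntil z hz).support_eq_cons
    rw [this] at hw
    rcases List.mem_cons.mp hw with h | h
    · exact absurd h hne
    · exact h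
  exact hdisj hw1 hw2

lemma core {V : Type} [DecidableEq V] {G : SimpleGraph V} {t z v w b : V}
    (hzv : G.Adj z v) (hwv : w ≠ v) (hzw : z ≠ w) (hzb : z ≠ b) (hwb : w ≠ b) (hbt : b ≠ t)
    (hzsep : ¬ ReachAvoiding G {x | x ∈ s(w, b)} z t)
    (P Q : G.Walk w t) (hP : P.IsPath) (hQ : Q.IsPath)
    (hdisj : ∀ x, x ∈ P.support → x ∈ Q.support → x = w ∨ x = t)
    (hzP : z ∈ P.support) (hvQ : v ∈ Q.support) : False := by
  unfold ReachAvoiding at hzsep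
  push_neg at hzsep
  -- tail of P from z avoids w
  have hwP' : w ∉ (P.dropUntil z hzP).support :=
    start_not_mem_dropUntil hP hzP (Ne.symm hzw)
  -- apply separation to P.dropUntil z : Walk z t
  obtain ⟨x, hxs, hxf⟩ := hzsep (P.dropUntil z hzP)
  have hxf' : x = w ∨ x = b := Sym2.mem_iff.mp hxf
  have hbP : b ∈ P.support := by
    rcases hxf' with rfl | rfl
    · exact absurd hxs hwP'
    · exact Walk.support_dropUntil_subset _ _ hxs
  have hbQ : b ∉ Q.support := by
    intro hbQ
    rcases hdisj b hbP hbQ with rfl | rfl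
    · exact hwb rfl
    · exact hbt rfl
  -- build z → t walk avoiding {w, b}
  have hwQ' : w ∉ (Q.dropUntil v hvQ).support :=
    start_not_mem_dropUntil hQ hvQ hwv
  obtain ⟨y, hys, hyf⟩ := hzsep (Walk.cons hzv (Q.dropUntil v hvQ))
  rw [Walk.support_cons, List.mem_cons] at hys
  rcases Sym2.mem_iff.mp hyf with rfl | rfl
  · rcases hys with h | h
    · exact hzw h.symm
    · exact hwQ' h
  · rcases hys with h | h
    · exact hzb h.symm
    · exact hbQ (Walk.support_dropUntil_subset _ _ h)

/-- In a 2-vertex-connected graph, if  is separated from  by , then  is not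
separated from  by . -/
theorem linkSep_antisymm {V : Type} (G : SimpleGraph V) (t : V) (e f : Sym2 V)
    (hG : TwoConnected G) (h : LinkSep G t e f) :
    ¬ LinkSep G t f e := by
  classical
  rintro ⟨hf', he', hfe, htf, z, hze, hzf, hzsep⟩
  obtain ⟨he, hf, hef, hte, w, hwf, hwe, hwsep⟩ := h
  obtain ⟨v, rfl⟩ := Sym2.mem_iff_exists.mp hze
  obtain ⟨b, rfl⟩ := Sym2.mem_iff_exists.mp hwf
  have hadj_e : G.Adj z v := G.mem_edgeSet.mp he
  have hadj_f : G.Adj w b := G.mem_edgeSet.mp hf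
  rw [Sym2.mem_iff] at hwe hte hzf htf
  push_neg at hwe hte hzf htf
  have hwt : w ≠ t := fun h => htf.1 h.symm
  obtain ⟨P, Q, hP, hQ, -, hdisj⟩ := hG w t hwt
  unfold ReachAvoiding at hwsep
  push_neg at hwsep
  obtain ⟨xP, hxPs, hxPe⟩ := hwsep P
  obtain ⟨xQ, hxQs, hxQe⟩ := hwsep Q
  rw [Set.mem_setOf_eq, Sym2.mem_iff] at hxPe hxQe
  have hznot : ¬ (z ∈ P.support ∧ z ∈ Q.support) := by
    rintro ⟨h1, h2⟩
    rcases hdisj z h1 h2 with h | h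
    · exact hwe.1 h.symm
    · exact hte.1 h.symm
  have hvnot : ¬ (v ∈ P.support ∧ v ∈ Q.support) := by
    rintro ⟨h1, h2⟩
    rcases hdisj v h1 h2 with h | h
    · exact hwe.2 h.symm
    · exact hte.2 h.symm
  rcases hxPe with rfl | rfl <;> rcases hxQe with rfl | rfl
  · exact hznot ⟨hxPs, hxQs⟩
  · exact core hadj_e hwe.2 hzf.1 hzf.2 hadj_f.ne (fun h => htf.2 h.symm) hzsep
      P Q hP hQ hdisj hxPs hxQs
  · exact core hadj_e hwe.2 hzf.1 hzf.2 hadj_f.ne (fun h => htf.2 h.symm) hzsep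
      Q P hQ hP (fun x h1 h2 => hdisj x h2 h1) hxQs hxPs
  · exact hvnot ⟨hxPs, hxQs⟩
end

section
/- Let G be a 2-vertex-connected graph with distinguished vertex t, and let e, f, g be links of G. If f is separated from t by e, and g is separated from t by f, then g is separated from t by e. -/
open SimpleGraph

lemma reachAvoiding_trans {V : Type} {G : SimpleGraph V} {s : Set V} {a b c : V}
    (h1 : ReachAvoiding G s a b) (h2 : ReachAvoiding G s b c) : ReachAvoiding G s a c := by
  obtain ⟨p, hp⟩ := h1
  obtain ⟨q, hq⟩ := h2
  refine ⟨p.append q, fun x hx => ?_⟩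
  rcases (Walk.mem_support_append_iff _ _).1 hx with h | h
  · exact hp x h
  · exact hq x h

lemma reachAvoiding_adj {V : Type} {G : SimpleGraph V} {s : Set V} {a b : V}
    (hab : G.Adj a b) (ha : a ∉ s) (hb : b ∉ s) : ReachAvoiding G s a b := by
  refine ⟨Walk.cons hab Walk.nil, fun x hx => ?_⟩
  simp only [Walk.support_cons, Walk.support_nil, List.mem_cons, List.mem_singleton,
    List.not_mem_nil, or_false] at hx
  rcases hx with rfl | rfl <;> assumption

/-- Any endpoint of `f` outside `e` is cut off from `t` by `e`, given that one such
endpoint is. -/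
lemma bad_of_mem {V : Type} {G : SimpleGraph V} {t : V} {e f : Sym2 V}
    (hf : f ∈ G.edgeSet) {w : V} (hwf : w ∈ f) (hwe : w ∉ e)
    (hbad : ¬ ReachAvoiding G {x | x ∈ e} w t) :
    ∀ x ∈ f, x ∉ e → ¬ ReachAvoiding G {x | x ∈ e} x t := by
  intro x hx hxe hreach
  by_cases hxw : x = w
  · exact hbad (hxw ▸ hreach)
  · have hadj : G.Adj w x := by
      induction f using Sym2.ind with
      | _ c d =>
        rw [SimpleGraph.mem_edgeSet] at hf
        rw [Sym2.mem_iff] at hx hwf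
        rcases hwf with rfl | rfl <;> rcases hx with rfl | rfl
        · exact absurd rfl hxw
        · exact hf
        · exact hf.symm
        · exact absurd rfl hxw
    exact hbad (reachAvoiding_trans (reachAvoiding_adj hadj hwe hxe) hreach)

/-- If `a` is an endpoint of the link `s(a,b)`, no endpoint of `f` outside `{a,b}`
reaches `t` avoiding `{a,b}`, and `a ∉ f`, then `a` reaches `t` avoiding `f`. -/
lemma endpoint_reaches {V : Type} {G : SimpleGraph V} {t a b : V} {f : Sym2 V}
    (hG : TwoConnected G)
    (he : s(a, b) ∈ G.edgeSet)
    (hta : t ≠ a) (htb : t ≠ b)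
    (haf : a ∉ f)
    (badF : ∀ x ∈ f, x ∉ s(a, b) → ¬ ReachAvoiding G {y | y ∈ s(a, b)} x t) :
    ReachAvoiding G {x | x ∈ f} a t := by
  classical
  have hab : a ≠ b := G.ne_of_adj (G.mem_edgeSet.1 he)
  obtain ⟨p, q, hp, hq, hpq, hdisj⟩ := hG a t hta.symm
  have hr : ∃ r : G.Walk a t, r.IsPath ∧ b ∉ r.support := by
    by_cases hbp : b ∈ p.support
    · refine ⟨q, hq, fun hbq => ?_⟩
      rcases hdisj b hbp hbq with rfl | rfl
      · exact hab rfl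
      · exact htb rfl
    · exact ⟨p, hp, hbp⟩
  obtain ⟨r, hr, hbr⟩ := hr
  refine ⟨r, fun x hx hxf => ?_⟩
  have hxf' : x ∈ f := hxf
  have hxa : x ≠ a := fun h => haf (h ▸ hxf')
  have hxb : x ≠ b := fun h => hbr (h ▸ hx)
  have hxe : x ∉ s(a, b) := by
    rw [Sym2.mem_iff]
    rintro (rfl | rfl)
    · exact hxa rfl
    · exact hxb rfl
  refine badF x hxf' hxe ⟨r.dropUntil x hx, fun y hy => ?_⟩
  have hyr : y ∈ r.support := Walk.support_dropUntil_subset _ _ hy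
  intro hye
  have hye' : y = a ∨ y = b := Sym2.mem_iff.1 hye
  rcases hye' with rfl | rfl
  · -- y = a lies in the dropped part: contradiction with r being a path
    have hnd : r.support.Nodup := hr.support_nodup
    have hspec := r.take_spec hx
    rw [← hspec, Walk.support_append] at hnd
    have hdis := List.disjoint_of_nodup_append hnd
    have ha1 : y ∈ (r.takeUntil x hx).support := Walk.start_mem_support _
    have hy2 : y ∈ (r.dropUntil x hx).support.tail := by
      have hcons := (r.dropUntil x hx).support_eq_cons
      rw [hcons, List.mem_cons] at hy
      rcases hy with h | h
      · exact absurd h.symm hxa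
      · exact h
    exact hdis ha1 hy2
  · exact hbr hyr

/-- In a 2-vertex-connected graph, link separation from  is transitive:
if  is separated from  by  and  is separated from  by ,
then  is separated from  by . -/
theorem linkSep_trans {V : Type} (G : SimpleGraph V) (t : V) (e f g : Sym2 V)
    (hG : TwoConnected G) (hef : LinkSep G t e f) (hfg : LinkSep G t f g) :
    LinkSep G t e g := by
  classical
  obtain ⟨he, hf, hef', hte, wf, hwf, hwfe, hbadf⟩ := hef
  obtain ⟨hf', hg, hfg', htf, wg, hwg, hwgf, hbadg⟩ := hfg
  have badF : ∀ x ∈ f, x ∉ e → ¬ ReachAvoiding G {y | y ∈ e} x t :=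
    bad_of_mem hf hwf hwfe hbadf
  -- Step 1: the witness `wg` is not an endpoint of `e`.
  have hwge : wg ∉ e := by
    intro hmem
    induction e using Sym2.ind with
    | _ a b =>
      have hta : t ≠ a := fun h => hte (h ▸ Sym2.mem_mk_left a b)
      have htb : t ≠ b := fun h => hte (h ▸ Sym2.mem_mk_right a b)
      rw [Sym2.mem_iff] at hmem
      rcases hmem with rfl | rfl
      · exact hbadg (endpoint_reaches hG he hta htb hwgf badF)
      · have he' : s(wg, a) ∈ G.edgeSet := by rwa [Sym2.eq_swap] at he
        have badF' : ∀ x ∈ f, x ∉ s(wg, a) → ¬ ReachAvoiding G {y | y ∈ s(wg, a)} x t := by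
          intro x hxf hxe
          have : ({y | y ∈ s(wg, a)} : Set V) = {y | y ∈ s(a, wg)} := by
            rw [Sym2.eq_swap]
          rw [this]
          exact badF x hxf (by rwa [Sym2.eq_swap] at hxe)
        exact hbadg (endpoint_reaches hG he' htb hta hwgf badF')
  -- Step 2: `wg` cannot reach `t` avoiding the endpoints of `e`.
  have hbad : ¬ ReachAvoiding G {y | y ∈ e} wg t := by
    rintro ⟨p, hp⟩
    have hhit : ∃ c ∈ p.support, c ∈ f := by
      by_contra h
      push_neg at h
      exact hbadg ⟨p, fun x hx => h x hx⟩
    obtain ⟨c, hcp, hcf⟩ := hhit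
    have hce : c ∉ e := hp c hcp
    exact badF c hcf hce
      ⟨p.dropUntil c hcp, fun x hx => hp x (Walk.support_dropUntil_subset _ _ hx)⟩
  exact ⟨he, hg, fun h => hwge (h ▸ hwg), hte, wg, hwg, hwge, hbad⟩
end

section
/- Let G be a biconnected planar graph with distinguished vertex t such that no separating link of G is incident to t, and let S be the set of separating links. Then there exists a linear ordering (e_1, …, e_|S|) of S such that whenever e_j is separated from t by e_i, one has i < j. -/
open SimpleGraph

/-- `H` is a minor of `G`, witnessed by pairwise disjoint nonempty connected branch sets. -/
def IsMinor {W V : Type} (H : SimpleGraph W) (G : SimpleGraph V) : Prop :=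
  ∃ B : W → Set V,
    (∀ w, (B w).Nonempty) ∧
    (∀ w, ∀ a ∈ B w, ∀ b ∈ B w, ReachAvoiding G (B w)ᶜ a b) ∧
    (∀ w₁ w₂, w₁ ≠ w₂ → Disjoint (B w₁) (B w₂)) ∧
    (∀ w₁ w₂, H.Adj w₁ w₂ → ∃ a ∈ B w₁, ∃ b ∈ B w₂, G.Adj a b)

/-- Planarity, via Wagner's characterization: no `K₅` and no `K₃,₃` minor. -/
def PlanarGraph {V : Type} (G : SimpleGraph V) : Prop :=
  ¬ IsMinor (completeGraph (Fin 5)) G ∧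
  ¬ IsMinor (completeBipartiteGraph (Fin 3) (Fin 3)) G

/-- First-hit lemma: walking to a vertex of `s`, there is a first moment the walk meets `s`;
the prefix up to that moment avoids `s` except at its very end, and each vertex strictly
before the end is reachable from the start by a walk avoiding `s`. -/
lemma firstHit {V : Type} {G : SimpleGraph V} (s : Set V) {u v : V} (p : G.Walk u v)
    (hv : v ∈ s) :
    ∃ z, z ∈ s ∧ ∃ q : G.Walk u z,
      (∀ x ∈ q.support, x ∈ p.support) ∧
      (∀ x ∈ q.support.dropLast, x ∉ s ∧ ∃ r : G.Walk u x, ∀ y ∈ r.support, y ∉ s) := by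
  induction p with
  | nil => exact ⟨_, hv, .nil, by simp, by simp⟩
  | @cons u u' v h p ih =>
    by_cases hu : u ∈ s
    · exact ⟨u, hu, .nil, by simp, by simp⟩
    · obtain ⟨z, hz, q, hq1, hq2⟩ := ih hv
      refine ⟨z, hz, q.cons h, ?_, ?_⟩
      · intro x hx
        rw [Walk.support_cons, List.mem_cons] at hx
        rcases hx with rfl | hx
        · simp
        · simp [hq1 x hx]
      · intro x hx
        rw [Walk.support_cons, List.dropLast_cons_of_ne_nil q.support_ne_nil,
          List.mem_cons] at hx
        rcases hx with rfl | hx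
        · exact ⟨hu, .nil, by simpa using hu⟩
        · obtain ⟨hxs, r, hr⟩ := hq2 x hx
          refine ⟨hxs, r.cons h, ?_⟩
          intro y hy
          rw [Walk.support_cons, List.mem_cons] at hy
          rcases hy with rfl | hy
          · exact hu
          · exact hr y hy

/-- The support of a walk ends with its final vertex. -/
lemma walk_support_concat {V : Type} {G : SimpleGraph V} {u v : V} (p : G.Walk u v) :
    p.support = p.support.dropLast ++ [v] := by
  induction p with
  | nil => simp
  | @cons u u' v h p ih =>
    rw [Walk.support_cons, List.dropLast_cons_of_ne_nil p.support_ne_nil]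
    rw [List.cons_append, ← ih]

/-- The set of vertices joined to `t` by a walk avoiding the endpoints of `e`. -/
def TSide {V : Type} (G : SimpleGraph V) (t : V) (e : Sym2 V) : Set V :=
  {x | ReachAvoiding G {y | y ∈ e} x t}

lemma sym2_exists_mem_not_mem {V : Type} {e f : Sym2 V} (hd : ¬ e.IsDiag) (hne : e ≠ f) :
    ∃ a ∈ e, a ∉ f := by
  induction e using Sym2.ind with
  | _ a b =>
    by_cases haf : a ∈ f
    · by_cases hbf : b ∈ f
      · exfalso
        apply hne
        have hab : a ≠ b := by simpa using hd
        exact ((Sym2.mem_and_mem_iff hab).mp ⟨haf, hbf⟩).symm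
      · exact ⟨b, by simp, hbf⟩
    · exact ⟨a, by simp, haf⟩

/-- Key lemma: if `f` is separated from `t` by `e` (and `t` is not on `f`), then the
`t`-side of `e` is strictly contained in the `t`-side of `f`. -/
lemma tside_ssubset {V : Type} {G : SimpleGraph V} {t : V} (hbic : Biconnected G)
    {e f : Sym2 V} (hef : LinkSep G t e f) (htf : t ∉ f) :
    TSide G t e ⊂ TSide G t f := by
  obtain ⟨heE, hfE, hne, hte, w, hwf, hwe, hw⟩ := hef
  classical
  obtain ⟨d, hfwd⟩ : ∃ d, s(w, d) = f := ⟨_, Sym2.other_spec hwf⟩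
  have hadjwd : G.Adj w d := by rw [← SimpleGraph.mem_edgeSet, hfwd]; exact hfE
  have hwT : w ∉ TSide G t e := hw
  have hdT : d ∉ TSide G t e := by
    rintro ⟨q, hq⟩
    refine hw ⟨q.cons hadjwd, ?_⟩
    intro x hx
    rw [Walk.support_cons, List.mem_cons] at hx
    rcases hx with rfl | hx
    · exact hwe
    · exact hq x hx
  have hmemf : ∀ x, x ∈ f → x = w ∨ x = d := by
    intro x hx
    rw [← hfwd] at hx
    exact Sym2.mem_iff.mp hx
  have hsub : TSide G t e ⊆ TSide G t f := by
    rintro x ⟨p, hp⟩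
    refine ⟨p, fun y hy hyf => ?_⟩
    have hyT : y ∈ TSide G t e :=
      ⟨p.dropUntil y hy, fun z hz => hp z (Walk.support_dropUntil_subset p hy hz)⟩
    rcases hmemf y hyf with rfl | rfl
    · exact hwT hyT
    · exact hdT hyT
  -- strictness
  obtain ⟨a, hae, haf⟩ := sym2_exists_mem_not_mem (G.not_isDiag_of_mem_edgeSet heE) hne
  have had : a ≠ d := fun h => haf (by rw [← hfwd, h]; simp)
  have htd : t ≠ d := fun h => htf (by rw [← hfwd, h]; simp)
  obtain ⟨p, hp⟩ := hbic.2 d t a htd had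
  have hpd : ∀ x ∈ p.support, x ≠ d := fun x hx h => hp x hx (by simp [h])
  obtain ⟨z, hzs, q, hqsub, hqpre⟩ := firstHit {y | y ∈ e} p hae
  have hzE : z ∉ TSide G t e := by
    rintro ⟨r, hr⟩
    exact hr z r.start_mem_support hzs
  have hqavoid : ∀ x ∈ q.support, x ∉ {y | y ∈ f} := by
    intro x hx hxf
    have hxd : x ≠ d := hpd x (hqsub x hx)
    rcases hmemf x hxf with rfl | rfl
    · -- x = w (w has been substituted by x)
      rw [walk_support_concat q, List.mem_append] at hx
      rcases hx with hx | hx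
      · obtain ⟨-, r, hr⟩ := hqpre x hx
        exact hw ⟨r.reverse, fun y hy => hr y (by rwa [Walk.support_reverse, List.mem_reverse] at hy)⟩
      · have hxz : x = z := by simpa using hx
        exact hwe (hxz ▸ hzs)
    · exact hxd rfl
  have hzF : z ∈ TSide G t f :=
    ⟨q.reverse, fun y hy => hqavoid y (by rwa [Walk.support_reverse, List.mem_reverse] at hy)⟩
  exact ⟨hsub, fun hba => hzE (hba hzF)⟩

/-- In a biconnected planar graph in which no separating link is incident to `t`, the
separating links can be linearly ordered so that whenever `e_j` is separated from `t`
by `e_i`, the link `e_i` comes strictly earlier in the order. -/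
theorem exists_sepLink_ordering {V : Type} [Fintype V] (G : SimpleGraph V) (t : V)
    (hplanar : PlanarGraph G) (hbic : Biconnected G)
    (ht : ∀ e : Sym2 V, SepLink G e → t ∉ e) :
    ∃ L : List (Sym2 V), L.Nodup ∧ (∀ e : Sym2 V, e ∈ L ↔ SepLink G e) ∧
      ∀ i j : Fin L.length, LinkSep G t (L.get i) (L.get j) → i < j := by
  classical
  set m : Sym2 V → ℕ := fun e => (TSide G t e).ncard with hm
  set r : Sym2 V → Sym2 V → Prop := fun e f => m e ≤ m f with hr
  haveI : DecidableRel r := fun a b => Nat.decLe _ _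
  haveI hTot : IsTotal (Sym2 V) r := ⟨fun a b => Nat.le_total (m a) (m b)⟩
  haveI hTrans : IsTrans (Sym2 V) r := ⟨fun a b c => Nat.le_trans⟩
  set S : List (Sym2 V) := (Finset.univ.filter (fun e => SepLink G e)).toList with hS
  refine ⟨S.insertionSort r, ?_, ?_, ?_⟩
  · exact ((List.perm_insertionSort r S).nodup_iff).mpr (Finset.nodup_toList _)
  · intro e
    rw [(List.perm_insertionSort r S).mem_iff, hS, Finset.mem_toList, Finset.mem_filter]
    simp
  · intro i j hij
    have hsorted : (S.insertionSort r).Pairwise r := List.pairwise_insertionSort r S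
    have hjmem : (S.insertionSort r).get j ∈ S.insertionSort r := (S.insertionSort r).get_mem j
    have hjS : SepLink G ((S.insertionSort r).get j) := by
      rw [(List.perm_insertionSort r S).mem_iff] at hjmem
      have hjmem' : (S.insertionSort r).get j ∈
          (Finset.univ.filter (fun e => SepLink G e)).toList := hjmem
      exact (Finset.mem_filter.mp (Finset.mem_toList.mp hjmem')).2
    have htf : t ∉ (S.insertionSort r).get j := ht _ hjS
    have hlt : m ((S.insertionSort r).get i) < m ((S.insertionSort r).get j) :=
      Set.ncard_lt_ncard (tside_ssubset hbic hij htf) (Set.toFinite _)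
    by_contra hcon
    push_neg at hcon
    rcases eq_or_lt_of_le hcon with heq | hjlt
    · subst heq
      exact lt_irrefl _ hlt
    · exact absurd (hsorted.rel_get_of_lt hjlt) (not_le_of_gt hlt)
end

section
/- If a graph e is a separating link in a biconnected graph G (deleting both of its endpoints disconnects G), then every connected component of G minus the endpoints of e contains a neighbor of each endpoint of e. -/
open SimpleGraph

lemma aux_trunc {V : Type} {G : SimpleGraph V} {u v : V} :
    ∀ {w : V} (p : G.Walk w u), v ∉ p.support → w ≠ u → w ≠ v →
    ∃ a : V, G.Adj u a ∧ a ≠ u ∧ a ≠ v ∧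
      ∃ q : G.Walk w a, ∀ x ∈ q.support, x ∉ ({u, v} : Set V) := by
  intro w p
  induction p with
  | nil => intro _ h _; exact absurd rfl h
  | @cons s t u h p ih =>
    intro hv hsu hsv
    rw [SimpleGraph.Walk.support_cons] at hv
    simp only [List.mem_cons, not_or] at hv
    by_cases htu : t = u
    · subst htu
      exact ⟨s, h.symm, hsu, hsv, SimpleGraph.Walk.nil, by
        intro y hy
        simp only [SimpleGraph.Walk.support_nil, List.mem_singleton] at hy
        subst hy
        simp [hsu, hsv]⟩
    · have htv : t ≠ v := fun htv => hv.2 (htv ▸ p.start_mem_support)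
      obtain ⟨a, hau, haun, hav, q, hq⟩ := ih hv.2 htu htv
      refine ⟨a, hau, haun, hav, SimpleGraph.Walk.cons h q, ?_⟩
      intro y hy
      rw [SimpleGraph.Walk.support_cons, List.mem_cons] at hy
      rcases hy with rfl | hy
      · simp [hsu, hsv]
      · exact hq y hy

/-- Every connected component of a biconnected graph minus the endpoints of a
separating link contains a neighbor of each endpoint. -/
theorem sepLink_components_have_neighbors {V : Type} (G : SimpleGraph V) (u v : V)
    (hG : Biconnected G) (he : SepLink G s(u, v)) :
    ∀ w : V, w ≠ u → w ≠ v →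
      (∃ a : V, G.Adj u a ∧ a ≠ u ∧ a ≠ v ∧ ReachAvoiding G {u, v} w a) ∧
      (∃ b : V, G.Adj v b ∧ b ≠ u ∧ b ≠ v ∧ ReachAvoiding G {u, v} w b) := by
  intro w hwu hwv
  have huv : u ≠ v := (G.mem_edgeSet.mp he.1).ne
  constructor
  · obtain ⟨p, hp⟩ := hG.2 v w u hwv huv
    have hv : v ∉ p.support := fun hmem => hp v hmem rfl
    obtain ⟨a, hau, haun, hav, q, hq⟩ := aux_trunc p hv hwu hwv
    exact ⟨a, hau, haun, hav, q, hq⟩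
  · obtain ⟨p, hp⟩ := hG.2 u w v hwu huv.symm
    have hv : u ∉ p.support := fun hmem => hp u hmem rfl
    obtain ⟨b, hbv, hbvn, hbu, q, hq⟩ := aux_trunc p hv hwv hwu
    refine ⟨b, hbv, hbu, hbvn, q, ?_⟩
    rw [Set.pair_comm]
    exact hq
end

section
/- Let G be a connected graph that contains K_5 or K_{3,3} as a minor, and let t be any vertex of G. Then G contains K_5, respectively K_{3,3}, as a rooted minor with t as one of the five (respectively six) branch vertices; that is, the branch sets can be chosen so that t lies in one of them. -/
open SimpleGraph

/-- `(H, r)` is a rooted minor of `(G, t)` : a minor whose branch set for the root `r`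
contains `t`. -/
def IsRootedMinor {W V : Type} (H : SimpleGraph W) (r : W) (G : SimpleGraph V) (t : V) : Prop :=
  ∃ B : W → Set V,
    t ∈ B r ∧
    (∀ w, (B w).Nonempty) ∧
    (∀ w, ∀ a ∈ B w, ∀ b ∈ B w, ReachAvoiding G (B w)ᶜ a b) ∧
    (∀ w₁ w₂, w₁ ≠ w₂ → Disjoint (B w₁) (B w₂)) ∧
    (∀ w₁ w₂, H.Adj w₁ w₂ → ∃ a ∈ B w₁, ∃ b ∈ B w₂, G.Adj a b)


lemma exists_prefix {V : Type} {G : SimpleGraph V} (S : Set V) :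
    ∀ {u v : V} (_ : G.Walk u v), v ∈ S →
      ∃ d ∈ S, ∃ q : G.Walk u d, ∀ x ∈ q.support, x = d ∨ x ∉ S := by
  intro u v p
  induction p with
  | nil => exact fun hv => ⟨_, hv, Walk.nil, by simp⟩
  | @cons a b c h p ih =>
    intro hv
    by_cases ha : a ∈ S
    · exact ⟨a, ha, Walk.nil, by simp⟩
    · obtain ⟨d, hd, q, hq⟩ := ih hv
      refine ⟨d, hd, Walk.cons h q, ?_⟩
      intro x hx
      rcases List.mem_cons.mp (by simpa using hx) with rfl | hx'
      · exact Or.inr ha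
      · exact hq x hx'

lemma rooted_of_minor {W V : Type} [Nonempty W] (H : SimpleGraph W) (G : SimpleGraph V)
    (t : V) (hconn : G.Connected) (h : IsMinor H G) :
    ∃ r : W, IsRootedMinor H r G t := by
  classical
  obtain ⟨B, hne, hcon, hdisj, hadj⟩ := h
  set S : Set V := ⋃ w, B w with hS
  obtain ⟨b, hb⟩ := hne (Classical.arbitrary W)
  obtain ⟨p⟩ := hconn.preconnected t b
  obtain ⟨d, hdS, q, hq⟩ := exists_prefix S p (Set.mem_iUnion.mpr ⟨_, hb⟩)
  obtain ⟨r, hdr⟩ := Set.mem_iUnion.mp hdS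
  have memB' : ∀ w x, x ∈ B w →
      x ∈ (if w = r then B r ∪ {x | x ∈ q.support} else B w) := by
    intro w x hx
    by_cases hw : w = r
    · subst hw; simp only [if_pos rfl]; exact Or.inl hx
    · simpa [if_neg hw] using hx
  refine ⟨r, fun w => if w = r then B r ∪ {x | x ∈ q.support} else B w, ?_, ?_, ?_, ?_, ?_⟩
  · simp only [if_pos rfl]
    exact Or.inr q.start_mem_support
  · intro w
    by_cases hw : w = r
    · subst hw; simp only [if_pos rfl]; exact ⟨d, Or.inl hdr⟩
    · simp only [if_neg hw]; exact hne w
  · intro w a ha c hc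
    by_cases hw : w = r
    · subst hw
      simp only [if_pos rfl] at ha hc ⊢
      have key : ∀ a, a ∈ B w ∪ {x | x ∈ q.support} →
          ∃ qa : G.Walk a d, ∀ x ∈ qa.support, x ∈ B w ∪ {x | x ∈ q.support} := by
        intro a ha
        rcases ha with ha | ha
        · obtain ⟨qa, hqa⟩ := hcon w a ha d hdr
          exact ⟨qa, fun x hx => Or.inl (not_not.mp (hqa x hx))⟩
        · exact ⟨q.dropUntil a ha, fun x hx =>
            Or.inr (Walk.support_dropUntil_subset q ha hx)⟩
      obtain ⟨qa, hqa⟩ := key a ha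
      obtain ⟨qc, hqc⟩ := key c hc
      refine ⟨qa.append qc.reverse, fun x hx hxc => hxc ?_⟩
      rcases List.mem_append.mp ((Walk.support_append _ _) ▸ hx) with h' | h'
      · exact hqa x h'
      · have hx2 : x ∈ qc.reverse.support := List.tail_subset _ h'
        rw [Walk.support_reverse, List.mem_reverse] at hx2
        exact hqc x hx2
    · simp only [if_neg hw] at ha hc ⊢
      exact hcon w a ha c hc
  · intro w₁ w₂ hne12
    have main : ∀ w, w ≠ r → Disjoint (B r ∪ {x | x ∈ q.support}) (B w) := by
      intro w hw
      rw [Set.disjoint_left]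
      rintro x (hx | hx) hxw
      · exact Set.disjoint_left.mp (hdisj r w (Ne.symm hw)) hx hxw
      · rcases hq x hx with rfl | hxS
        · exact Set.disjoint_left.mp (hdisj r w (Ne.symm hw)) hdr hxw
        · exact hxS (Set.mem_iUnion.mpr ⟨w, hxw⟩)
    by_cases h1 : w₁ = r <;> by_cases h2 : w₂ = r
    · exact absurd (h1.trans h2.symm) hne12
    · subst h1; simp only [if_pos rfl, if_neg h2]; exact main w₂ h2
    · subst h2; simp only [if_pos rfl, if_neg h1]; exact (main w₁ h1).symm
    · simp only [if_neg h1, if_neg h2]; exact hdisj w₁ w₂ hne12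
  · intro w₁ w₂ hA
    obtain ⟨a, ha, c, hc, hac⟩ := hadj w₁ w₂ hA
    exact ⟨a, memB' w₁ a ha, c, memB' w₂ c hc, hac⟩

/-- In a connected graph containing `K₅` (resp. `K₃,₃`) as a minor, the branch sets can
be chosen so that any prescribed vertex `t` lies in one of them. -/
theorem minor_to_rootedMinor {V : Type} (G : SimpleGraph V) (t : V)
    (hconn : G.Connected) :
    (IsMinor (completeGraph (Fin 5)) G →
      ∃ r : Fin 5, IsRootedMinor (completeGraph (Fin 5)) r G t) ∧
    (IsMinor (completeBipartiteGraph (Fin 3) (Fin 3)) G →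
      ∃ r : Fin 3 ⊕ Fin 3, IsRootedMinor (completeBipartiteGraph (Fin 3) (Fin 3)) r G t) := by
  exact ⟨fun h => rooted_of_minor _ G t hconn h, fun h => rooted_of_minor _ G t hconn h⟩
end

section
/- The 4×4 grid graph contains, for every choice of a root vertex t, the rooted graph K_5 minus one edge incident to t (the K_5\e) as a rooted minor. -/
open SimpleGraph

/-- The 4 × 4 grid graph: vertices `(x, y)` with `x, y ∈ Fin 4`, adjacency at
`L1`-distance one. -/
def grid4 : SimpleGraph (Fin 4 × Fin 4) :=
  SimpleGraph.fromRel (fun a b =>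
    (a.1 = b.1 ∧ (a.2 : ℕ) + 1 = (b.2 : ℕ)) ∨ (a.2 = b.2 ∧ (a.1 : ℕ) + 1 = (b.1 : ℕ)))

/-- `K₅` minus one edge incident to the root `0`. -/
def K5e : SimpleGraph (Fin 5) :=
  (completeGraph (Fin 5)).deleteEdges {s((0 : Fin 5), (1 : Fin 5))}

instance grid4.adjDecidable : DecidableRel grid4.Adj := fun a b =>
  inferInstanceAs (Decidable (a ≠ b ∧
    (((a.1 = b.1 ∧ (a.2 : ℕ) + 1 = (b.2 : ℕ)) ∨ (a.2 = b.2 ∧ (a.1 : ℕ) + 1 = (b.1 : ℕ))) ∨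
     ((b.1 = a.1 ∧ (b.2 : ℕ) + 1 = (a.2 : ℕ)) ∨ (b.2 = a.2 ∧ (b.1 : ℕ) + 1 = (a.1 : ℕ))))))

instance K5e.adjDecidable : DecidableRel K5e.Adj := fun a b =>
  decidable_of_iff (a ≠ b ∧ ¬ s(a, b) = s((0 : Fin 5), (1 : Fin 5))) (by
    simp [K5e, SimpleGraph.deleteEdges_adj, completeGraph, Set.mem_singleton_iff])

lemma walk_from_head {V : Type} {G : SimpleGraph V} :
    ∀ (l : List V) (v : V), List.Chain' G.Adj (v :: l) → ∀ b ∈ v :: l,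
      ∃ p : G.Walk v b, ∀ x ∈ p.support, x ∈ v :: l := by
  intro l
  induction l with
  | nil =>
    intro v _ b hb
    rcases List.mem_singleton.mp hb with rfl
    exact ⟨SimpleGraph.Walk.nil, by simp⟩
  | cons w l ih =>
    intro v hch b hb
    have hadj : G.Adj v w := (List.isChain_cons_cons.mp hch).1
    have hch' : List.Chain' G.Adj (w :: l) := (List.isChain_cons_cons.mp hch).2
    rcases List.mem_cons.mp hb with rfl | hb'
    · exact ⟨SimpleGraph.Walk.nil, by simp⟩
    · obtain ⟨p, hp⟩ := ih w hch' b hb'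
      refine ⟨SimpleGraph.Walk.cons hadj p, ?_⟩
      intro x hx
      rw [SimpleGraph.Walk.support_cons] at hx
      rcases List.mem_cons.mp hx with rfl | h2
      · exact List.mem_cons_self
      · exact List.mem_cons_of_mem _ (hp x h2)

lemma reach_of_chain {V : Type} {G : SimpleGraph V} {l : List V}
    (h : List.Chain' G.Adj l) {a b : V} (ha : a ∈ l) (hb : b ∈ l) :
    ∃ p : G.Walk a b, ∀ x ∈ p.support, x ∈ l := by
  cases l with
  | nil => cases ha
  | cons v l' =>
    obtain ⟨p1, hp1⟩ := walk_from_head l' v h a ha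
    obtain ⟨p2, hp2⟩ := walk_from_head l' v h b hb
    refine ⟨p1.reverse.append p2, ?_⟩
    intro x hx
    rw [SimpleGraph.Walk.support_append] at hx
    rcases List.mem_append.mp hx with hx' | hx'
    · exact hp1 x (by simpa [SimpleGraph.Walk.support_reverse] using hx')
    · exact hp2 x (List.mem_of_mem_tail hx')

def adjChain : List (Fin 4 × Fin 4) → Bool
  | a :: b :: l => decide (grid4.Adj a b) && adjChain (b :: l)
  | _ => true

lemma adjChain_sound : ∀ l, adjChain l = true → List.Chain' grid4.Adj l
  | [] , _ => List.isChain_nil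
  | [_], _ => List.isChain_singleton _
  | a :: b :: l, h => by
      have h' := h
      unfold adjChain at h'
      rw [Bool.and_eq_true] at h'
      exact List.isChain_cons_cons.mpr ⟨of_decide_eq_true h'.1, adjChain_sound (b :: l) h'.2⟩

lemma verify (t : Fin 4 × Fin 4) (L : Fin 5 → List (Fin 4 × Fin 4))
    (hch : ∀ w, adjChain (L w) = true)
    (h1 : t ∈ L 0)
    (hne : ∀ w, L w ≠ [])
    (hd : ∀ w₁ w₂, w₁ ≠ w₂ → ∀ x ∈ L w₁, x ∉ L w₂)
    (he : ∀ w₁ w₂ : Fin 5, K5e.Adj w₁ w₂ →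
      ∃ a ∈ L w₁, ∃ b ∈ L w₂, grid4.Adj a b) :
    IsRootedMinor K5e 0 grid4 t := by
  refine ⟨fun w => {x | x ∈ L w}, h1, ?_, ?_, ?_, ?_⟩
  · intro w
    obtain ⟨x, hx⟩ := List.exists_mem_of_ne_nil (L w) (hne w)
    exact ⟨x, hx⟩
  · intro w a ha b hb
    obtain ⟨p, hp⟩ := reach_of_chain (adjChain_sound _ (hch w)) ha hb
    exact ⟨p, fun x hx hxc => hxc (hp x hx)⟩
  · intro w₁ w₂ hne'
    rw [Set.disjoint_left]
    exact fun x hx => hd w₁ w₂ hne' x hx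
  · exact he

def partsTable : List (List (List (Fin 4 × Fin 4))) :=
 [
  [[(0,0), (1,0)],
   [(1,2)],
   [(0,1), (0,2), (0,3), (1,3)],
   [(2,0), (2,1), (2,2), (2,3), (3,3), (3,2), (3,1), (3,0)],
   [(1,1)]],
  [[(0,1), (0,2), (0,3)],
   [(2,2)],
   [(1,3), (2,3), (3,3)],
   [(0,0), (1,0), (2,0), (2,1), (3,1), (3,0), (3,1), (3,2)],
   [(1,1), (1,2)]],
  [[(0,1), (0,2), (0,3)],
   [(2,2)],
   [(1,3), (2,3), (3,3)],
   [(0,0), (1,0), (2,0), (2,1), (3,1), (3,0), (3,1), (3,2)],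
   [(1,1), (1,2)]],
  [[(0,1), (0,2), (0,3)],
   [(2,2)],
   [(1,3), (2,3), (3,3)],
   [(0,0), (1,0), (2,0), (2,1), (3,1), (3,0), (3,1), (3,2)],
   [(1,1), (1,2)]],
  [[(0,0), (1,0)],
   [(1,2)],
   [(0,1), (0,2), (0,3), (1,3)],
   [(2,0), (2,1), (2,2), (2,3), (3,3), (3,2), (3,1), (3,0)],
   [(1,1)]],
  [[(1,1)],
   [(3,0), (3,1), (3,2), (3,3)],
   [(0,1), (0,2), (0,3), (1,3), (1,2), (1,3), (2,3)],
   [(0,0), (1,0), (2,0)],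
   [(2,1), (2,2)]],
  [[(1,2)],
   [(0,0), (1,0)],
   [(0,1), (0,2), (0,3), (1,3)],
   [(2,0), (2,1), (2,2), (2,3), (3,3), (3,2), (3,1), (3,0)],
   [(1,1)]],
  [[(0,0), (0,1), (0,2), (0,3), (1,3)],
   [(2,1)],
   [(1,2), (2,2), (2,3), (3,3), (3,2), (3,1), (3,0)],
   [(1,0), (2,0)],
   [(1,1)]],
  [[(0,0), (1,0), (2,0), (3,0), (3,1)],
   [(1,2)],
   [(2,1), (2,2)],
   [(1,3), (2,3), (3,3), (3,2)],
   [(0,1), (0,2), (0,3), (0,2), (0,1), (1,1)]],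
  [[(2,1)],
   [(0,1)],
   [(1,1)],
   [(0,0), (1,0), (2,0), (3,0), (3,1), (3,2)],
   [(0,2), (0,3), (1,3), (1,2), (2,2), (2,3), (3,3)]],
  [[(2,2)],
   [(0,1), (0,2), (0,3)],
   [(1,3), (2,3), (3,3)],
   [(0,0), (1,0), (2,0), (2,1), (3,1), (3,0), (3,1), (3,2)],
   [(1,1), (1,2)]],
  [[(1,3), (2,3), (3,3)],
   [(2,1)],
   [(2,2)],
   [(0,0), (0,1), (0,2), (0,3), (0,2), (1,2), (1,1), (1,0), (2,0)],
   [(3,0), (3,1), (3,2)]],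
  [[(3,0), (3,1), (3,2), (3,3)],
   [(1,1)],
   [(0,1), (0,2), (0,3), (1,3), (1,2), (1,3), (2,3)],
   [(0,0), (1,0), (2,0)],
   [(2,1), (2,2)]],
  [[(3,0), (3,1), (3,2), (3,3)],
   [(1,1)],
   [(0,1), (0,2), (0,3), (1,3), (1,2), (1,3), (2,3)],
   [(0,0), (1,0), (2,0)],
   [(2,1), (2,2)]],
  [[(3,0), (3,1), (3,2), (3,3)],
   [(1,1)],
   [(0,1), (0,2), (0,3), (1,3), (1,2), (1,3), (2,3)],
   [(0,0), (1,0), (2,0)],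
   [(2,1), (2,2)]],
  [[(3,0), (3,1), (3,2), (3,3)],
   [(1,1)],
   [(0,1), (0,2), (0,3), (1,3), (1,2), (1,3), (2,3)],
   [(0,0), (1,0), (2,0)],
   [(2,1), (2,2)]]]

def partsL (t : Fin 4 × Fin 4) (w : Fin 5) : List (Fin 4 × Fin 4) :=
  (partsTable.getD ((t.1 : ℕ) * 4 + (t.2 : ℕ)) []).getD (w : ℕ) []

/-- For every choice of root `t`, the 4 × 4 grid contains `K₅ \ e` (with the missing
edge incident to the root) as a rooted minor. -/
theorem grid4_contains_K5e_rooted (t : Fin 4 × Fin 4) :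
    IsRootedMinor K5e 0 grid4 t := by
  refine verify t (partsL t) ?_ ?_ ?_ ?_ ?_ <;> revert t <;> decide
end

section
/- Let (G,t) be a rooted graph and G' a subgraph of G containing t. If there exists a perfectly resilient forwarding pattern for (G,t), then there exists one for (G',t). -/
open SimpleGraph

/-- A (local) forwarding pattern for the rooted graph `(G, t)`: each vertex `v ≠ t`
forwards an incoming packet (with in-port the previous vertex, `none` meaning the
routing starts at `v`) along a non-failed incident link, depending only on the set of
failed links incident to `v`; it outputs `none` only if all incident links failed. -/
structure ForwardingPattern {V : Type} (G : SimpleGraph V) (t : V) where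
  next : V → Option V → Set (Sym2 V) → Option V
  next_adj : ∀ v i F u, v ≠ t → next v i F = some u → G.Adj v u ∧ s(v, u) ∉ F
  next_none : ∀ v i F, v ≠ t → next v i F = none → ∀ u, G.Adj v u → s(v, u) ∈ F
  next_local : ∀ v i F F', v ≠ t →
    F ∩ G.incidenceSet v = F' ∩ G.incidenceSet v → next v i F = next v i F'

/-- One step of the routing determined by a forwarding pattern: the state is the pair
(previous vertex, current vertex); the routing halts once `t` is reached (and records
this by keeping `some t` as the previous vertex forever). -/
def routeStep {V : Type} [DecidableEq V] {G : SimpleGraph V} {t : V}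
    (π : ForwardingPattern G t) (F : Set (Sym2 V)) :
    Option V × Option V → Option V × Option V
  | (_, none) => (none, none)
  | (p, some v) => if v = t then (some t, none) else (some v, π.next v p F)

/-- The routing starting at `s` with failure set `F` reaches `t`. -/
def Reaches {V : Type} [DecidableEq V] {G : SimpleGraph V} {t : V}
    (π : ForwardingPattern G t) (F : Set (Sym2 V)) (s : V) : Prop :=
  ∃ n : ℕ, ((routeStep π F)^[n] (none, some s)).2 = some t

/-- A forwarding pattern is perfectly resilient if, for every start vertex `s` and every
failure set `F` such that `s` and `t` remain connected after deleting `F`, the induced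
routing reaches `t`. -/
def PerfectlyResilient {V : Type} [DecidableEq V] {G : SimpleGraph V} {t : V}
    (π : ForwardingPattern G t) : Prop :=
  ∀ s : V, ∀ F : Set (Sym2 V), (G.deleteEdges F).Reachable s t → Reaches π F s

/-- `(G, t)` admits a perfectly resilient forwarding pattern. -/
def ExistsPR {V : Type} [DecidableEq V] (G : SimpleGraph V) (t : V) : Prop :=
  ∃ π : ForwardingPattern G t, PerfectlyResilient π

section Aux

variable {V : Type} [DecidableEq V] {G : SimpleGraph V} {t : V} (H : G.Subgraph)

/-- Lift a failure set of the subgraph to the ambient graph: an ambient edge fails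
if it is (the image of) a failed subgraph edge, or if it is not an edge of `H`. -/
def liftF (F : Set (Sym2 ↥H.verts)) : Set (Sym2 V) :=
  (Sym2.map (Subtype.val : ↥H.verts → V)) '' F ∪ {e | e ∉ H.edgeSet}

lemma liftF_mono {F : Set (Sym2 ↥H.verts)} {a b : ↥H.verts}
    (hmem : s((a : V), (b : V)) ∈ liftF H F) (he : H.Adj a.val b.val) : s(a, b) ∈ F := by
  rcases hmem with ⟨f, hf, hmap⟩ | hne
  · have : f = s(a, b) := by
      apply Sym2.map.injective Subtype.val_injective
      simpa using hmap
    exact this ▸ hf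
  · exact absurd (SimpleGraph.Subgraph.mem_edgeSet.mpr he) hne

lemma not_liftF {F : Set (Sym2 ↥H.verts)} {a b : ↥H.verts}
    (hF : s(a, b) ∉ F) (he : H.Adj a.val b.val) : s((a : V), (b : V)) ∉ liftF H F := by
  intro hmem
  exact hF (liftF_mono H hmem he)

lemma adj_of_not_liftF {F : Set (Sym2 ↥H.verts)} {u v : V}
    (h : s(u, v) ∉ liftF H F) : H.Adj u v := by
  rw [liftF, Set.mem_union, not_or] at h
  have := h.2
  simp only [Set.mem_setOf_eq, not_not] at this
  exact SimpleGraph.Subgraph.mem_edgeSet.mp this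

open Classical in
/-- The induced forwarding pattern on the subgraph. -/
noncomputable def subNext (π : ForwardingPattern G t) :
    ↥H.verts → Option ↥H.verts → Set (Sym2 ↥H.verts) → Option ↥H.verts :=
  fun v i F =>
    (π.next v.val (i.map Subtype.val) (liftF H F)).bind
      (fun u => if hu : u ∈ H.verts then some ⟨u, hu⟩ else none)

lemma val_ne_t {ht : t ∈ H.verts} {v : ↥H.verts} (hv : v ≠ (⟨t, ht⟩ : ↥H.verts)) :
    v.val ≠ t := fun h => hv (Subtype.ext h)

lemma subNext_eq (π : ForwardingPattern G t) {ht : t ∈ H.verts}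
    {v : ↥H.verts} (hv : v ≠ (⟨t, ht⟩ : ↥H.verts)) (i : Option ↥H.verts)
    (F : Set (Sym2 ↥H.verts)) :
    (subNext H π v i F).map Subtype.val = π.next v.val (i.map Subtype.val) (liftF H F) := by
  rcases hval : π.next v.val (i.map Subtype.val) (liftF H F) with _ | u
  · unfold subNext
    rw [hval]
    rfl
  · have hadj := π.next_adj v.val (i.map Subtype.val) (liftF H F) u (val_ne_t H hv) hval
    have hH : H.Adj v.val u := adj_of_not_liftF H hadj.2
    have hu : u ∈ H.verts := hH.snd_mem
    unfold subNext
    rw [hval]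
    simp [hu]

end Aux

/-- Perfect resilience is inherited by subgraphs containing the root. -/
theorem existsPR_subgraph {V : Type} [DecidableEq V] (G : SimpleGraph V) (t : V)
    (H : G.Subgraph) (ht : t ∈ H.verts) (h : ExistsPR G t) :
    ExistsPR H.coe ⟨t, ht⟩ := by
  classical
  obtain ⟨π, hπ⟩ := h
  have hA : ∀ (v : ↥H.verts) (i : Option ↥H.verts) (F : Set (Sym2 ↥H.verts)) (u : ↥H.verts),
      v ≠ ⟨t, ht⟩ → subNext H π v i F = some u → H.coe.Adj v u ∧ s(v, u) ∉ F := by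
    intro v i F u hv hsome
    have heq := subNext_eq H π hv i F
    rw [hsome] at heq
    have hadj := π.next_adj v.val (i.map Subtype.val) (liftF H F) u.val (val_ne_t H hv)
      heq.symm
    have hH : H.Adj v.val u.val := adj_of_not_liftF H hadj.2
    refine ⟨(SimpleGraph.Subgraph.coe_adj H v u).symm ▸ hH, fun hF => ?_⟩
    exact hadj.2 (Or.inl ⟨s(v, u), hF, by simp⟩)
  have hN : ∀ (v : ↥H.verts) (i : Option ↥H.verts) (F : Set (Sym2 ↥H.verts)),
      v ≠ ⟨t, ht⟩ → subNext H π v i F = none →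
        ∀ u, H.coe.Adj v u → s(v, u) ∈ F := by
    intro v i F hv hnone u hadj
    have heq := subNext_eq H π hv i F
    rw [hnone] at heq
    have hHadj : H.Adj v.val u.val := (SimpleGraph.Subgraph.coe_adj H v u) ▸ hadj
    have := π.next_none v.val (i.map Subtype.val) (liftF H F) (val_ne_t H hv)
      heq.symm u.val (hHadj.adj_sub)
    exact liftF_mono H this hHadj
  have hL : ∀ (v : ↥H.verts) (i : Option ↥H.verts) (F F' : Set (Sym2 ↥H.verts)),
      v ≠ ⟨t, ht⟩ → F ∩ H.coe.incidenceSet v = F' ∩ H.coe.incidenceSet v →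
        subNext H π v i F = subNext H π v i F' := by
    intro v i F F' hv hloc
    have key : liftF H F ∩ G.incidenceSet v.val = liftF H F' ∩ G.incidenceSet v.val := by
      have main : ∀ (F F' : Set (Sym2 ↥H.verts)),
          F ∩ H.coe.incidenceSet v = F' ∩ H.coe.incidenceSet v →
          ∀ e ∈ liftF H F ∩ G.incidenceSet v.val, e ∈ liftF H F' := by
        intro F F' hloc e he
        rcases he with ⟨hF, hinc⟩
        rcases hF with ⟨f, hf, hmap⟩ | hne
        · by_cases heH : e ∈ H.edgeSet
          · refine Or.inl ⟨f, ?_, hmap⟩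
            induction f with
            | _ a b =>
              have he' : e = s((a:V),(b:V)) := by simpa using hmap.symm
              subst he'
              have hHab : H.Adj a.val b.val := SimpleGraph.Subgraph.mem_edgeSet.mp heH
              have hcoe : H.coe.Adj a b := (SimpleGraph.Subgraph.coe_adj H a b).symm ▸ hHab
              have hvmem : v.val ∈ s((a:V),(b:V)) := hinc.2
              have hvf : v ∈ s(a, b) := by
                rcases Sym2.mem_iff.mp hvmem with h | h
                · exact Sym2.mem_iff.mpr (Or.inl (Subtype.ext h.symm).symm)
                · exact Sym2.mem_iff.mpr (Or.inr (Subtype.ext h.symm).symm)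
              have hfinc : s(a,b) ∈ H.coe.incidenceSet v := ⟨hcoe, hvf⟩
              have : s(a,b) ∈ F' ∩ H.coe.incidenceSet v := hloc ▸ ⟨hf, hfinc⟩
              exact this.1
          · exact Or.inr heH
        · exact Or.inr hne
      ext e
      constructor
      · intro he
        exact ⟨main F F' hloc e he, he.2⟩
      · intro he
        exact ⟨main F' F hloc.symm e he, he.2⟩
    have := π.next_local v.val (i.map Subtype.val) (liftF H F) (liftF H F')
      (val_ne_t H hv) key
    have h1 := subNext_eq H π hv i F
    have h2 := subNext_eq H π hv i F'
    rw [this] at h1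
    rw [← h2] at h1
    exact Option.map_injective Subtype.val_injective h1
  set t' : ↥H.verts := ⟨t, ht⟩ with ht'
  set πH : ForwardingPattern H.coe t' := ⟨subNext H π, hA, hN, hL⟩ with hπH
  refine ⟨πH, ?_⟩
  intro s F hreach
  let hom : H.coe.deleteEdges F →g G.deleteEdges (liftF H F) :=
    ⟨Subtype.val, by
      intro a b hab
      rw [SimpleGraph.deleteEdges_adj] at hab ⊢
      have hcoe : H.Adj a.val b.val := (SimpleGraph.Subgraph.coe_adj H a b) ▸ hab.1
      exact ⟨hcoe.adj_sub, not_liftF H hab.2 hcoe⟩⟩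
  have hGreach : (G.deleteEdges (liftF H F)).Reachable s.val t := by
    have := hreach.map hom
    exact this
  obtain ⟨n, hn⟩ := hπ s.val (liftF H F) hGreach
  have key : ∀ m : ℕ,
      (routeStep π (liftF H F))^[m] (none, some s.val) =
        (((routeStep πH F)^[m] (none, some s)).1.map Subtype.val,
         ((routeStep πH F)^[m] (none, some s)).2.map Subtype.val) := by
    intro m
    induction m with
    | zero => simp
    | succ m ih =>
      rw [Function.iterate_succ_apply', Function.iterate_succ_apply', ih]
      rcases hst : (routeStep πH F)^[m] (none, some s) with ⟨p, c⟩
      rcases c with _ | v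
      · simp [routeStep]
      · by_cases hvt : v = t'
        · subst hvt
          simp [routeStep, ht']
        · have hvvt : v.val ≠ t := val_ne_t H hvt
          simp only [Option.map_some]
          rw [show routeStep π (liftF H F) (p.map Subtype.val, some v.val) =
              (some v.val, π.next v.val (p.map Subtype.val) (liftF H F)) from by
                simp [routeStep, hvvt],
            show routeStep πH F (p, some v) = (some v, πH.next v p F) from by
                simp [routeStep, hvt]]
          have heq := subNext_eq H π hvt p F
          rw [← heq]
          rfl
  rw [key n] at hn
  refine ⟨n, ?_⟩
  rcases hc : ((routeStep πH F)^[n] (none, some s)).2 with _ | u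
  · rw [hc] at hn; simp at hn
  · rw [hc] at hn
    simp only [Option.map_some, Option.some.injEq] at hn
    exact congrArg some (Subtype.ext hn)
end
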